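/- arXiv:0807.0385 — 6 statements merged into one kernel-verified Lean document; each statement's English description precedes it below -/
import Mathlib

section
/- Let Φ be a Leonard system with parameter array ({θ_i}; {θ_i*}; {φ_i}; {ϕ_i}) and define ϑ_i = Σ_{ℓ=0}^{i-1} (θ_ℓ − θ_{d−ℓ})/(θ_0 − θ_d) for 1 ≤ i ≤ d. Then φ_i − ϕ_i = (θ_i* − θ_{i−1}*)(θ_0 − θ_d) ϑ_i for 1 ≤ i ≤ d. -/
/-!
By PA3 and PA4, and since `φ₁ - ϕ₁ = (θ*₁ - θ*₀)(θ₀ - θ_d)`, the claim for `i = n + 1` is the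
identity `(g n + g 0) ∑_{ℓ ≤ n} E ℓ = (∑_{ℓ ≤ n} g ℓ)(E n + E 0)` for `E ℓ = θ_ℓ - θ_{d-ℓ}` and
`g k = θ*_{k+1} - θ*_k`. PA5 makes both `E` and `g` solutions of `x (k+2) = β x (k+1) - x k`.
For two solutions `a`, `b` the determinant `a m b ℓ - a ℓ b m` depends only on `m - ℓ`
(its value at `m = ℓ + 1` is the constant Wronskian), so the difference of the two sides,
`∑_ℓ (C (n - ℓ) - C ℓ)` with `C k = a k b 0 - a 0 b k`, vanishes by reflecting the sum.
Summing the recurrence only determines `(2 - β) ∑ x`, which says nothing when `β = 2`.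
-/

open Finset

section Recurrence

variable {K : Type*} [Field K]

def ThreeTermRec (β : K) (N : ℕ) (a : ℕ → K) : Prop :=
  ∀ k, k + 2 ≤ N → a (k + 2) = β * a (k + 1) - a k

namespace ThreeTermRec

variable {β : K} {N : ℕ} {a b : ℕ → K}

theorem mono {N' : ℕ} (ha : ThreeTermRec β N a) (hN : N' ≤ N) : ThreeTermRec β N' a :=
  fun k hk => ha k (hk.trans hN)

theorem wronskian_eq (ha : ThreeTermRec β N a) (hb : ThreeTermRec β N b) :
    ∀ j, j + 1 ≤ N → a (j + 1) * b j - a j * b (j + 1) = a 1 * b 0 - a 0 * b 1 := by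
  intro j
  induction j with
  | zero => intro; rfl
  | succ j ih =>
    intro hj
    rw [ha j hj, hb j hj]
    linear_combination ih (by omega)

theorem cross_add_eq (ha : ThreeTermRec β N a) (hb : ThreeTermRec β N b) :
    ∀ k j, k + j ≤ N → a (k + j) * b j - a j * b (k + j) = a k * b 0 - a 0 * b k := by
  intro k
  induction k using Nat.twoStepInduction with
  | zero => intro j _; simp
  | one => intro j hj; rw [add_comm]; exact ha.wronskian_eq hb j (by omega)
  | more k ih₀ ih₁ =>
    intro j hj
    have h₀ := ih₀ j (by omega)
    have h₁ := ih₁ j (by omega)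
    rw [show k + 1 + j = k + j + 1 by omega] at h₁
    rw [show k + 2 + j = k + j + 2 by omega, ha (k + j) (by omega), hb (k + j) (by omega),
      ha k (by omega), hb k (by omega)]
    linear_combination β * h₁ - h₀

theorem add_mul_sum_eq (ha : ThreeTermRec β N a) (hb : ThreeTermRec β N b) {n : ℕ} (hn : n ≤ N) :
    (a n + a 0) * ∑ ℓ ∈ range (n + 1), b ℓ = (∑ ℓ ∈ range (n + 1), a ℓ) * (b n + b 0) := by
  set C : ℕ → K := fun k => a k * b 0 - a 0 * b k
  have hterm : ∀ ℓ ∈ range (n + 1), (a n + a 0) * b ℓ - a ℓ * (b n + b 0) = C (n - ℓ) - C ℓ := by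
    intro ℓ hℓ
    have h := ha.cross_add_eq hb (n - ℓ) ℓ (by simp at hℓ; omega)
    rw [Nat.sub_add_cancel (by simp at hℓ; omega)] at h
    simp only [C]
    linear_combination h
  have hreflect := sum_range_reflect C (n + 1)
  rw [Nat.add_sub_cancel] at hreflect
  rw [← sub_eq_zero, mul_sum, sum_mul, ← sum_sub_distrib, sum_congr rfl hterm, sum_sub_distrib,
    hreflect, sub_self]

end ThreeTermRec

section ThirdDifference

variable {β : K} {d : ℕ} {x : ℕ → K}

theorem threeTermRec_sub_succ
    (hx : ∀ k, k + 3 ≤ d → x k - x (k + 3) = (β + 1) * (x (k + 1) - x (k + 2))) :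
    ThreeTermRec β (d - 1) (fun k => x (k + 1) - x k) := by
  intro k hk
  linear_combination -hx k (by omega)

/-- `x k - β x (k + 1) + x (k + 2)` is constant, which makes the recurrence survive `ℓ ↦ d - ℓ`. -/
theorem threeTermRec_sub_reflect
    (hx : ∀ k, k + 3 ≤ d → x k - x (k + 3) = (β + 1) * (x (k + 1) - x (k + 2))) :
    ThreeTermRec β d (fun ℓ => x ℓ - x (d - ℓ)) := by
  have hconst : ∀ k, k + 2 ≤ d → x k - β * x (k + 1) + x (k + 2) = x 0 - β * x 1 + x 2 := by
    intro k
    induction k with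
    | zero => intro; rfl
    | succ k ih =>
      intro hk
      linear_combination ih (by omega) - hx k (by omega)
  intro k hk
  have h := hconst (d - (k + 2)) (by omega)
  rw [show d - (k + 2) + 1 = d - (k + 1) by omega, show d - (k + 2) + 2 = d - k by omega] at h
  linear_combination hconst k hk - h

end ThirdDifference

end Recurrence

theorem stmt_4_general {K : Type*} [Field K] (d : ℕ)
    (θ θs φ ϕ : ℕ → K)
    (PA2 : Set.InjOn θ (Set.Iic d) ∧ Set.InjOn θs (Set.Iic d))
    (PA3 : ∀ i, 1 ≤ i → i ≤ d →
      φ i = ϕ 1 * (∑ ℓ ∈ Finset.range i, (θ ℓ - θ (d - ℓ)) / (θ 0 - θ d)) +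
        (θs i - θs 0) * (θ (i - 1) - θ d))
    (PA4 : ∀ i, 1 ≤ i → i ≤ d →
      ϕ i = φ 1 * (∑ ℓ ∈ Finset.range i, (θ ℓ - θ (d - ℓ)) / (θ 0 - θ d)) +
        (θs i - θs 0) * (θ (d - i + 1) - θ 0))
    (PA5 : ∃ β : K, ∀ i, 2 ≤ i → i ≤ d - 1 →
      θ (i - 2) - θ (i + 1) = (β + 1) * (θ (i - 1) - θ i) ∧
      θs (i - 2) - θs (i + 1) = (β + 1) * (θs (i - 1) - θs i)) :
    ∀ i, 1 ≤ i → i ≤ d →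
      φ i - ϕ i = (θs i - θs (i - 1)) * (θ 0 - θ d) *
        (∑ ℓ ∈ Finset.range i, (θ ℓ - θ (d - ℓ)) / (θ 0 - θ d)) := by
  intro i hi hid
  obtain ⟨n, rfl⟩ : ∃ n, i = n + 1 := ⟨i - 1, by omega⟩
  obtain ⟨β, hβ⟩ := PA5
  have hrec : ∀ k, k + 3 ≤ d →
      θ k - θ (k + 3) = (β + 1) * (θ (k + 1) - θ (k + 2)) ∧
      θs k - θs (k + 3) = (β + 1) * (θs (k + 1) - θs (k + 2)) := by
    intro k hk
    simpa [show k + 2 - 1 = k + 1 by omega] using hβ (k + 2) (by omega) (by omega)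
  have key := (threeTermRec_sub_succ fun k hk => (hrec k hk).2).add_mul_sum_eq
    ((threeTermRec_sub_reflect fun k hk => (hrec k hk).1).mono (Nat.sub_le d 1)) (n := n)
    (by omega)
  rw [sum_range_sub θs] at key
  have hne : θ 0 - θ d ≠ 0 :=
    sub_ne_zero.mpr <| (PA2.1.ne_iff (by simp) (by simp)).mpr (by omega)
  have hφ₁ : φ 1 - ϕ 1 = (θs 1 - θs 0) * (θ 0 - θ d) := by
    have h := PA3 1 le_rfl (by omega)
    rw [sum_range_one, Nat.sub_zero, div_self hne, Nat.sub_self] at h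
    linear_combination h
  rw [PA3 (n + 1) (by omega) hid, PA4 (n + 1) (by omega) hid, ← sum_div,
    show d - (n + 1) + 1 = d - n by omega, Nat.add_sub_cancel]
  field_simp
  linear_combination (θ d - θ 0) * key - (∑ ℓ ∈ range (n + 1), (θ ℓ - θ (d - ℓ))) * hφ₁

/-- For a parameter array `({θ_i}; {θ_i*}; {φ_i}; {ϕ_i})` satisfying PA1–PA5, with
`ϑ_i = ∑_{ℓ<i} (θ_ℓ − θ_{d−ℓ})/(θ_0 − θ_d)`, one has
`φ_i − ϕ_i = (θ_i* − θ_{i−1}*)(θ_0 − θ_d) ϑ_i` for `1 ≤ i ≤ d`. -/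
theorem stmt_4 {K : Type*} [Field K] (d : ℕ) (hd : 1 ≤ d)
    (θ θs φ ϕ : ℕ → K)
    (PA1 : ∀ i, 1 ≤ i → i ≤ d → φ i ≠ 0 ∧ ϕ i ≠ 0)
    (PA2 : Set.InjOn θ (Set.Iic d) ∧ Set.InjOn θs (Set.Iic d))
    (PA3 : ∀ i, 1 ≤ i → i ≤ d →
      φ i = ϕ 1 * (∑ ℓ ∈ Finset.range i, (θ ℓ - θ (d - ℓ)) / (θ 0 - θ d)) +
        (θs i - θs 0) * (θ (i - 1) - θ d))
    (PA4 : ∀ i, 1 ≤ i → i ≤ d →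
      ϕ i = φ 1 * (∑ ℓ ∈ Finset.range i, (θ ℓ - θ (d - ℓ)) / (θ 0 - θ d)) +
        (θs i - θs 0) * (θ (d - i + 1) - θ 0))
    (PA5 : ∃ β : K, ∀ i, 2 ≤ i → i ≤ d - 1 →
      θ (i - 2) - θ (i + 1) = (β + 1) * (θ (i - 1) - θ i) ∧
      θs (i - 2) - θs (i + 1) = (β + 1) * (θs (i - 1) - θs i)) :
    ∀ i, 1 ≤ i → i ≤ d →
      φ i - ϕ i = (θs i - θs (i - 1)) * (θ 0 - θ d) *
        (∑ ℓ ∈ Finset.range i, (θ ℓ - θ (d - ℓ)) / (θ 0 - θ d)) :=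
  stmt_4_general d θ θs φ ϕ PA2 PA3 PA4 PA5
end

section
/- Suppose the eigenvalue sequence has the q-form θ_i = θ_0 + h(1−q^i)(1−s q^{i+1}) q^{−i} with q ≠ 0, q^i ≠ 1 for 1 ≤ i ≤ d, and θ_0 ≠ θ_d. Then ϑ_i = Σ_{ℓ=0}^{i−1}(θ_ℓ − θ_{d−ℓ})/(θ_0 − θ_d) equals (q^i − 1)(q^{d−i+1} − 1)/((q − 1)(q^d − 1)) for 1 ≤ i ≤ d. -/
/-!
Expanding the product, `θ_a - θ_b = h (q^{-(a+b)} - s q) (q^b - q^a)`. For `a + b = d` the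
common factor `c = h (q^{-d} - s q)` also appears in `θ_0 - θ_d = c (q^d - 1)`, so it cancels
from every summand of `ϑ_i`, and `θ_0 ≠ θ_d` forces `c ≠ 0` and `q^d ≠ 1`. What remains is
`∑_{ℓ<i} (q^{d-ℓ} - q^ℓ) / (q^d - 1)`, and reflecting the first half of the sum turns the
numerator into `(q^{d-i+1} - 1) ∑_{ℓ<i} q^ℓ`, a geometric sum.
-/

open Finset

section QEigenvalue

variable {K : Type*} [Field K]

def qEigenvalue (θ0 h s q : K) (i : ℕ) : K :=
  θ0 + h * (1 - q ^ i) * (1 - s * q ^ (i + 1)) * (q ^ i)⁻¹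

theorem qEigenvalue_sub_qEigenvalue (θ0 h s : K) {q : K} (hq : q ≠ 0) (a b : ℕ) :
    qEigenvalue θ0 h s q a - qEigenvalue θ0 h s q b =
      h * ((q ^ (a + b))⁻¹ - s * q) * (q ^ b - q ^ a) := by
  unfold qEigenvalue
  field_simp
  ring

end QEigenvalue

theorem sum_range_pow_sub_pow_reflect {R : Type*} [CommRing R] (q : R) {i d : ℕ} (hi : i ≤ d) :
    ∑ ℓ ∈ range i, (q ^ (d - ℓ) - q ^ ℓ) = (q ^ (d - i + 1) - 1) * ∑ ℓ ∈ range i, q ^ ℓ := by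
  have reflect : ∑ ℓ ∈ range i, q ^ (d - ℓ) = q ^ (d - i + 1) * ∑ ℓ ∈ range i, q ^ ℓ := by
    rw [← sum_range_reflect, mul_sum]
    refine sum_congr rfl fun ℓ hℓ => ?_
    rw [← pow_add]
    congr 1
    have := mem_range.mp hℓ
    omega
  rw [sum_sub_distrib, reflect]
  ring

theorem stmt_6_general {K : Type*} [Field K] (d : ℕ)
    (q h s θ0 : K) (θ : ℕ → K)
    (hq : q ≠ 0)
    (hθ : ∀ i ≤ d, θ i = θ0 + h * (1 - q ^ i) * (1 - s * q ^ (i + 1)) * (q ^ i)⁻¹)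
    (hdist : θ 0 ≠ θ d) :
    ∀ i, 1 ≤ i → i ≤ d →
      (∑ ℓ ∈ Finset.range i, (θ ℓ - θ (d - ℓ)) / (θ 0 - θ d)) =
        (q ^ i - 1) * (q ^ (d - i + 1) - 1) / ((q - 1) * (q ^ d - 1)) := by
  intro i _ hid
  set c := h * ((q ^ d)⁻¹ - s * q)
  have hdiff : ∀ ℓ ≤ d, θ ℓ - θ (d - ℓ) = c * (q ^ (d - ℓ) - q ^ ℓ) := fun ℓ hℓ => by
    rw [hθ ℓ hℓ, hθ (d - ℓ) (Nat.sub_le d ℓ)]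
    have := qEigenvalue_sub_qEigenvalue θ0 h s hq ℓ (d - ℓ)
    rwa [Nat.add_sub_cancel' hℓ] at this
  have hdiff0 : θ 0 - θ d = c * (q ^ d - 1) := by simpa using hdiff 0 (Nat.zero_le d)
  obtain ⟨hc, hqd⟩ := mul_ne_zero_iff.mp (hdiff0 ▸ sub_ne_zero.mpr hdist)
  have hq1 : q ≠ 1 := by rintro rfl; simp at hqd
  calc ∑ ℓ ∈ range i, (θ ℓ - θ (d - ℓ)) / (θ 0 - θ d)
      = (∑ ℓ ∈ range i, (q ^ (d - ℓ) - q ^ ℓ)) / (q ^ d - 1) := by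
        rw [sum_div]
        refine sum_congr rfl fun ℓ hℓ => ?_
        rw [hdiff ℓ (by have := mem_range.mp hℓ; omega), hdiff0, mul_div_mul_left _ _ hc]
    _ = (q ^ i - 1) * (q ^ (d - i + 1) - 1) / ((q - 1) * (q ^ d - 1)) := by
        rw [sum_range_pow_sub_pow_reflect q hid, geom_sum_eq hq1, mul_div_assoc', div_div,
          mul_comm (q ^ (d - i + 1) - 1)]

/-- q-case: if `θ_i = θ_0 + h(1−q^i)(1−s q^{i+1}) q^{−i}` with `q ≠ 0`, `q^i ≠ 1` for
`1 ≤ i ≤ d` and `θ_0 ≠ θ_d`, then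
`ϑ_i = ∑_{ℓ<i} (θ_ℓ − θ_{d−ℓ})/(θ_0 − θ_d) = (q^i − 1)(q^{d−i+1} − 1)/((q − 1)(q^d − 1))`. -/
theorem stmt_6 {K : Type*} [Field K] (d : ℕ) (hd : 1 ≤ d)
    (q h s θ0 : K) (θ : ℕ → K)
    (hq : q ≠ 0) (hq1 : ∀ i, 1 ≤ i → i ≤ d → q ^ i ≠ 1)
    (hθ : ∀ i ≤ d, θ i = θ0 + h * (1 - q ^ i) * (1 - s * q ^ (i + 1)) * (q ^ i)⁻¹)
    (hdist : θ 0 ≠ θ d) :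
    ∀ i, 1 ≤ i → i ≤ d →
      (∑ ℓ ∈ Finset.range i, (θ ℓ - θ (d - ℓ)) / (θ 0 - θ d)) =
        (q ^ i - 1) * (q ^ (d - i + 1) - 1) / ((q - 1) * (q ^ d - 1)) :=
  stmt_6_general d q h s θ0 θ hq hθ hdist
end

section
/- Suppose θ_i = θ_0 + h(s−1+(1−s+2i)(−1)^i) for 0 ≤ i ≤ d with d even and the θ_i mutually distinct. Then ϑ_i = Σ_{ℓ=0}^{i−1}(θ_ℓ − θ_{d−ℓ})/(θ_0 − θ_d) equals i/d when i is even and (d−i+1)/d when i is odd, for 1 ≤ i ≤ d. -/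
/-! For `ℓ ≤ d` the factors `(-1)^ℓ` and `(-1)^(d-ℓ)` agree since `d` is even, so
`θ_ℓ - θ_{d-ℓ} = -2h (d - 2ℓ) (-1)^ℓ`; the case `ℓ = 0` gives `θ_0 - θ_d = -2hd`, which is nonzero
by injectivity. Hence `ϑ_i = d⁻¹ ∑_{ℓ<i} (d - 2ℓ)(-1)^ℓ`, and this alternating sum telescopes in
pairs to `i` for `i` even and `d - i + 1` for `i` odd. -/

open Finset

theorem sum_range_sub_two_mul_mul_neg_one_pow {R : Type*} [CommRing R] (a : R) (i : ℕ) :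
    ∑ ℓ ∈ range i, (a - 2 * ℓ) * (-1) ^ ℓ = if Even i then (i : R) else a - i + 1 := by
  induction i with
  | zero => simp
  | succ n ih =>
    rw [sum_range_succ, ih]
    rcases Nat.even_or_odd n with hn | hn
    · rw [if_pos hn, if_neg (Nat.not_even_iff_odd.2 hn.add_one), hn.neg_one_pow]
      push_cast
      ring
    · rw [if_neg (Nat.not_even_iff_odd.2 hn), if_pos hn.add_one, hn.neg_one_pow]
      push_cast
      ring

theorem theta_sub_theta_reflect {R : Type*} [CommRing R] {d : ℕ} (hde : Even d)
    {h s θ0 : R} {θ : ℕ → R}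
    (hθ : ∀ i ≤ d, θ i = θ0 + h * (s - 1 + (1 - s + 2 * (i : R)) * (-1 : R) ^ i))
    {ℓ : ℕ} (hℓ : ℓ ≤ d) :
    θ ℓ - θ (d - ℓ) = -(2 * h) * ((d - 2 * ℓ) * (-1) ^ ℓ) := by
  have hsign : (-1 : R) ^ (d - ℓ) = (-1) ^ ℓ :=
    neg_one_pow_congr ((Nat.even_sub hℓ).trans (iff_true_left hde))
  rw [hθ ℓ hℓ, hθ (d - ℓ) (Nat.sub_le d ℓ), hsign, Nat.cast_sub hℓ]
  ring

theorem stmt_8_general {K : Type*} [Field K] (d : ℕ) (hd : 1 ≤ d) (hde : Even d)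
    (h s θ0 : K) (θ : ℕ → K)
    (hθ : ∀ i ≤ d, θ i = θ0 + h * (s - 1 + (1 - s + 2 * (i : K)) * (-1 : K) ^ i))
    (hinj : Set.InjOn θ (Set.Iic d)) :
    ∀ i, 1 ≤ i → i ≤ d →
      (∑ ℓ ∈ Finset.range i, (θ ℓ - θ (d - ℓ)) / (θ 0 - θ d)) =
        if Even i then (i : K) / (d : K) else ((d : K) - (i : K) + 1) / (d : K) := by
  intro i _ hid
  have hdenom : θ 0 - θ d = -(2 * h) * d := by
    simpa using theta_sub_theta_reflect hde hθ (Nat.zero_le d)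
  have hne : -(2 * h) * d ≠ 0 := by
    rw [← hdenom, sub_ne_zero]
    intro h0d
    have := hinj (Set.mem_Iic.2 (Nat.zero_le d)) (Set.mem_Iic.2 le_rfl) h0d
    omega
  rw [← sum_div, hdenom, sum_congr rfl fun ℓ hℓ => theta_sub_theta_reflect hde hθ
    (le_trans (mem_range.1 hℓ).le hid), ← mul_sum, mul_div_mul_left _ _ (left_ne_zero_of_mul hne),
    sum_range_sub_two_mul_mul_neg_one_pow, ite_div]

/-- Bannai/Ito-type case, `d` even: if `θ_i = θ_0 + h(s−1+(1−s+2i)(−1)^i)` with the `θ_i`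
mutually distinct, `char K ≠ 2` and `d` invertible in `K`, then
`ϑ_i = ∑_{ℓ<i} (θ_ℓ − θ_{d−ℓ})/(θ_0 − θ_d)` equals `i/d` for `i` even and `(d−i+1)/d`
for `i` odd, for `1 ≤ i ≤ d`. -/
theorem stmt_8 {K : Type*} [Field K] (d : ℕ) (hd : 1 ≤ d) (hde : Even d)
    (h s θ0 : K) (θ : ℕ → K)
    (hchar : (2 : K) ≠ 0)
    (hθ : ∀ i ≤ d, θ i = θ0 + h * (s - 1 + (1 - s + 2 * (i : K)) * (-1 : K) ^ i))
    (hinj : Set.InjOn θ (Set.Iic d))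
    (hdK : (d : K) ≠ 0) :
    ∀ i, 1 ≤ i → i ≤ d →
      (∑ ℓ ∈ Finset.range i, (θ ℓ - θ (d - ℓ)) / (θ 0 - θ d)) =
        if Even i then (i : K) / (d : K) else ((d : K) - (i : K) + 1) / (d : K) :=
  stmt_8_general d hd hde h s θ0 θ hθ hinj
end

section
/- Let Φ, Φ' be Leonard systems with diameters d ≥ d', and suppose (·|·): V × V' → K is a nonzero bilinear form that is ρ-balanced with respect to Φ, Φ'. Then the map proj : V → V' defined by (v|v') = ⟨proj v, v'⟩' for all v, v' satisfies proj(E_0 V) = E_0' V'. In particular proj(E_0 V) ≠ 0. -/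
open Matrix

/-- A Leonard system of diameter `d` over a field `K`, realized in the matrix algebra
`Mat_{d+1}(K)`.  The idempotent sequences are indexed by `ℕ` with the convention
`E i = 0` for `i > d` (as in the paper). -/
structure LeonardSystem (K : Type*) [Field K] (d : ℕ) where
  A : Matrix (Fin (d+1)) (Fin (d+1)) K
  Astar : Matrix (Fin (d+1)) (Fin (d+1)) K
  E : ℕ → Matrix (Fin (d+1)) (Fin (d+1)) K
  Estar : ℕ → Matrix (Fin (d+1)) (Fin (d+1)) K
  theta : ℕ → K
  thetastar : ℕ → K
  theta_inj : Set.InjOn theta (Set.Iic d)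
  thetastar_inj : Set.InjOn thetastar (Set.Iic d)
  E_ne : ∀ i ≤ d, E i ≠ 0
  Estar_ne : ∀ i ≤ d, Estar i ≠ 0
  E_top : ∀ i, d < i → E i = 0
  Estar_top : ∀ i, d < i → Estar i = 0
  AE : ∀ i ≤ d, A * E i = theta i • E i
  AstarEstar : ∀ i ≤ d, Astar * Estar i = thetastar i • Estar i
  EE : ∀ i j, E i * E j = if i = j then E i else 0
  EstarEstar : ∀ i j, Estar i * Estar j = if i = j then Estar i else 0
  sumE : ∑ i ∈ Finset.range (d+1), E i = 1
  sumEstar : ∑ i ∈ Finset.range (d+1), Estar i = 1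
  trid_far : ∀ i j, i ≤ d → j ≤ d → (i + 1 < j ∨ j + 1 < i) → Estar i * A * Estar j = 0
  trid_near : ∀ i j, i ≤ d → j ≤ d → (i + 1 = j ∨ j + 1 = i) → Estar i * A * Estar j ≠ 0
  dtrid_far : ∀ i j, i ≤ d → j ≤ d → (i + 1 < j ∨ j + 1 < i) → E i * Astar * E j = 0
  dtrid_near : ∀ i j, i ≤ d → j ≤ d → (i + 1 = j ∨ j + 1 = i) → E i * Astar * E j ≠ 0

/-- A bilinear form `B : V × V' → K` is `ρ`-balanced with respect to Leonard systems
`Φ`, `Φ'` (of diameters `d ≥ d'`) if it is nonzero and satisfies (B1), (B2). -/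
def IsBalancedForm {K : Type*} [Field K] {d d' : ℕ} (Φ : LeonardSystem K d) (Φ' : LeonardSystem K d')
    (ρ : ℕ) (B : (Fin (d+1) → K) →ₗ[K] (Fin (d'+1) → K) →ₗ[K] K) : Prop :=
  B ≠ 0 ∧
  (∀ i j, i ≤ d → j ≤ d' → i ≠ j + ρ →
    ∀ v v', B (Φ.Estar i *ᵥ v) (Φ'.Estar j *ᵥ v') = 0) ∧
  (∀ i j, i ≤ d → j ≤ d' → (i < j ∨ j + (d - d') < i) →
    ∀ v v', B (Φ.E i *ᵥ v) (Φ'.E j *ᵥ v') = 0)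

/-!
The inclusion `proj (E₀V) ⊆ E₀'V'` comes from (B2): for `j ≥ 1` we get
`⟨E_j' (proj E₀v), u⟩' = (E₀v | E_j' u) = 0` because `E_j'` is a polynomial in `A'`, and `⟨·,·⟩'` is
nondegenerate. As `E₀'V'` is one-dimensional, equality follows once `proj (E₀V) ≠ 0`.
If `proj (E₀V) = 0`, then `E₀V` lies in the left radical of `(·|·)`. By (B1) the radical is
stable under every `E_i*`, hence under `A*`; and every `A*`-stable subspace containing `E₀V` is `V`,
because `E_{k+1}V = E_{k+1}A*E_kV` (rank one and tridiagonality of `A*` on the `E_i V`) while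
`A*E_kV ⊆ E_0V + ⋯ + E_{k+1}V`. So the form would vanish.
-/

namespace Matrix

variable {K m n : Type*} [Field K] [Fintype n]

theorem rank_ne_zero_of_ne_zero [DecidableEq n] {M : Matrix m n K} (hM : M ≠ 0) : M.rank ≠ 0 := by
  rw [rank, Ne, Submodule.finrank_eq_zero, LinearMap.range_eq_bot, ← toLin'_apply',
    LinearEquiv.map_eq_zero_iff]
  exact hM

theorem rank_add_of_orthogonal {P Q : Matrix n n K} (hP : IsIdempotentElem P)
    (hQ : IsIdempotentElem Q) (hPQ : P * Q = 0) (hQP : Q * P = 0) :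
    (P + Q).rank = P.rank + Q.rank := by
  have hrange : LinearMap.range (P + Q).mulVecLin =
      LinearMap.range P.mulVecLin ⊔ LinearMap.range Q.mulVecLin := by
    refine le_antisymm ?_ (sup_le ?_ ?_)
    · rintro _ ⟨v, rfl⟩
      rw [mulVecLin_apply, add_mulVec]
      exact Submodule.add_mem_sup ⟨v, rfl⟩ ⟨v, rfl⟩
    · calc LinearMap.range P.mulVecLin = LinearMap.range ((P + Q) * P).mulVecLin := by
            rw [add_mul, hP.eq, hQP, add_zero]
        _ ≤ _ := by rw [mulVecLin_mul]; exact LinearMap.range_comp_le_range _ _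
    · calc LinearMap.range Q.mulVecLin = LinearMap.range ((P + Q) * Q).mulVecLin := by
            rw [add_mul, hQ.eq, hPQ, zero_add]
        _ ≤ _ := by rw [mulVecLin_mul]; exact LinearMap.range_comp_le_range _ _
  have hdisj : LinearMap.range P.mulVecLin ⊓ LinearMap.range Q.mulVecLin = ⊥ := by
    rw [Submodule.eq_bot_iff]
    rintro _ ⟨⟨u, rfl⟩, ⟨w, hw⟩⟩
    simp only [mulVecLin_apply] at hw ⊢
    rw [← hP.eq, ← mulVec_mulVec, ← hw, mulVec_mulVec, hPQ, zero_mulVec]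
  rw [rank, rank, rank, hrange, ← Submodule.finrank_sup_add_finrank_inf_eq, hdisj, finrank_bot,
    add_zero]

end Matrix

namespace OrthogonalIdempotents

variable {K n ι : Type*} [Field K] [Fintype n] [DecidableEq n] {e : ι → Matrix n n K}

theorem rank_sum (he : OrthogonalIdempotents e) (s : Finset ι) :
    (∑ i ∈ s, e i).rank = ∑ i ∈ s, (e i).rank := by
  classical
  induction s using Finset.induction with
  | empty => simp [Matrix.rank_zero]
  | insert i s hi ih =>
    rw [Finset.sum_insert hi, Finset.sum_insert hi, ← ih]
    refine Matrix.rank_add_of_orthogonal (he.idem i) he.isIdempotentElem_sum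
      (he.mul_sum_of_notMem hi) ?_
    rw [Finset.sum_mul]
    exact Finset.sum_eq_zero fun j hj => he.ortho (ne_of_mem_of_not_mem hj hi)

theorem rank_eq_one {s : Finset ι} (he : OrthogonalIdempotents e) (hsum : ∑ i ∈ s, e i = 1)
    (hne : ∀ i ∈ s, e i ≠ 0) (hcard : s.card = Fintype.card n) {i : ι} (hi : i ∈ s) :
    (e i).rank = 1 := by
  have hpos : ∀ j ∈ s, 1 ≤ (e j).rank := fun j hj =>
    Nat.one_le_iff_ne_zero.mpr (Matrix.rank_ne_zero_of_ne_zero (hne j hj))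
  have htotal : ∑ j ∈ s, (e j).rank = ∑ j ∈ s, 1 := by
    rw [← he.rank_sum, hsum, Matrix.rank_one, Finset.sum_const, smul_eq_mul, mul_one, hcard]
  exact ((Finset.sum_eq_sum_iff_of_le hpos).mp htotal.symm i hi).symm

end OrthogonalIdempotents

namespace LeonardSystem

open Polynomial

variable {K : Type*} [Field K] {d : ℕ} (Φ : LeonardSystem K d)

theorem orthogonalIdempotents_E : OrthogonalIdempotents Φ.E :=
  OrthogonalIdempotents.iff_mul_eq.mpr Φ.EE

theorem sum_E_mulVec (v : Fin (d+1) → K) : ∑ i ∈ Finset.range (d+1), Φ.E i *ᵥ v = v := by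
  rw [← sum_mulVec, Φ.sumE, one_mulVec]

theorem sum_Estar_mulVec (v : Fin (d+1) → K) :
    ∑ i ∈ Finset.range (d+1), Φ.Estar i *ᵥ v = v := by
  rw [← sum_mulVec, Φ.sumEstar, one_mulVec]

theorem rank_E {i : ℕ} (hi : i ≤ d) : (Φ.E i).rank = 1 :=
  Φ.orthogonalIdempotents_E.rank_eq_one Φ.sumE
    (fun j hj => Φ.E_ne j (Nat.lt_succ_iff.mp (Finset.mem_range.mp hj))) (by simp)
    (Finset.mem_range.mpr (Nat.lt_succ_of_le hi))

theorem A_pow_mul_E {i : ℕ} (hi : i ≤ d) (n : ℕ) : Φ.A ^ n * Φ.E i = Φ.theta i ^ n • Φ.E i := by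
  induction n with
  | zero => simp
  | succ n ih => rw [pow_succ', mul_assoc, ih, mul_smul_comm, Φ.AE i hi, smul_smul, ← pow_succ]

theorem aeval_A_mul_E (p : K[X]) {i : ℕ} (hi : i ≤ d) :
    aeval Φ.A p * Φ.E i = p.eval (Φ.theta i) • Φ.E i := by
  induction p using Polynomial.induction_on' with
  | add p q hp hq => rw [map_add, add_mul, hp, hq, eval_add, add_smul]
  | monomial n a =>
    rw [aeval_monomial, eval_monomial, Algebra.algebraMap_eq_smul_one, smul_one_mul,
      smul_mul_assoc, Φ.A_pow_mul_E hi, smul_smul]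

theorem E_mem_adjoin_A {j : ℕ} (hj : j ≤ d) : Φ.E j ∈ Algebra.adjoin K {Φ.A} := by
  classical
  set s := Finset.range (d+1)
  have hjs : j ∈ s := Finset.mem_range.mpr (Nat.lt_succ_of_le hj)
  have hinj : Set.InjOn Φ.theta s := Φ.theta_inj.mono fun i hi =>
    Set.mem_Iic.mpr (Nat.lt_succ_iff.mp (Finset.mem_range.mp hi))
  suffices aeval Φ.A (Lagrange.basis s Φ.theta j) = Φ.E j from
    this ▸ aeval_mem_adjoin_singleton K _
  rw [← mul_one (aeval _ _), ← Φ.sumE, Finset.mul_sum, Finset.sum_eq_single_of_mem j hjs]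
  · rw [Φ.aeval_A_mul_E _ hj, Lagrange.eval_basis_self hinj hjs, one_smul]
  · intro i hi hij
    rw [Φ.aeval_A_mul_E _ (Nat.lt_succ_iff.mp (Finset.mem_range.mp hi)),
      Lagrange.eval_basis_of_ne hij.symm hi, zero_smul]

theorem mem_range_E_of_forall_ne {i : ℕ} {w : Fin (d+1) → K}
    (h : ∀ j ≠ i, Φ.E j *ᵥ w = 0) : w ∈ LinearMap.range (Φ.E i).mulVecLin := by
  refine ⟨w, ?_⟩
  conv_rhs => rw [← Φ.sum_E_mulVec w]
  rw [mulVecLin_apply, Finset.sum_eq_single i (fun j _ hj => h j hj)]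
  intro hi
  rw [Φ.E_top i (by simpa using hi), zero_mulVec]

theorem Astar_mulVec_eq_sum (v : Fin (d+1) → K) :
    Φ.Astar *ᵥ v = ∑ i ∈ Finset.range (d+1), Φ.thetastar i • (Φ.Estar i *ᵥ v) := by
  conv_lhs => rw [← Φ.sum_Estar_mulVec v]
  rw [mulVec_sum]
  refine Finset.sum_congr rfl fun i hi => ?_
  rw [mulVec_mulVec, Φ.AstarEstar i (Nat.lt_succ_iff.mp (Finset.mem_range.mp hi)), smul_mulVec]

theorem sum_E_mulVec_Astar_mulVec_E {k : ℕ} (hk : k + 1 ≤ d) (u : Fin (d+1) → K) :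
    ∑ j ∈ Finset.range (k+2), Φ.E j *ᵥ Φ.Astar *ᵥ Φ.E k *ᵥ u = Φ.Astar *ᵥ Φ.E k *ᵥ u := by
  refine (Finset.sum_subset (Finset.range_subset_range.mpr (by omega)) fun j hj hjk => ?_).trans
    (Φ.sum_E_mulVec _)
  rw [Finset.mem_range] at hj hjk
  rw [mulVec_mulVec, mulVec_mulVec, Φ.dtrid_far j k (by omega) (by omega) (Or.inr (by omega)),
    zero_mulVec]

theorem range_E_succ_mul_Astar_mul_E {k : ℕ} (hk : k + 1 ≤ d) :
    LinearMap.range (Φ.E (k+1) * Φ.Astar * Φ.E k).mulVecLin =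
      LinearMap.range (Φ.E (k+1)).mulVecLin := by
  refine Submodule.eq_of_le_of_finrank_le ?_ ?_
  · rw [mul_assoc, mulVecLin_mul]
    exact LinearMap.range_comp_le_range _ _
  · rw [← rank, ← rank, Φ.rank_E hk, Nat.one_le_iff_ne_zero]
    exact rank_ne_zero_of_ne_zero (Φ.dtrid_near (k+1) k hk (by omega) (Or.inr rfl))

theorem eq_top_of_range_E_zero_le {W : Submodule K (Fin (d+1) → K)}
    (hE : LinearMap.range (Φ.E 0).mulVecLin ≤ W) (hAstar : ∀ w ∈ W, Φ.Astar *ᵥ w ∈ W) :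
    W = ⊤ := by
  suffices hW : ∀ k, LinearMap.range (Φ.E k).mulVecLin ≤ W by
    refine eq_top_iff.mpr fun v _ => ?_
    rw [← Φ.sum_E_mulVec v]
    exact W.sum_mem fun k _ => hW k ⟨v, rfl⟩
  intro k
  induction k using Nat.strong_induction_on with
  | _ k ih =>
    rcases k with _ | k
    · exact hE
    by_cases hk : k + 1 ≤ d
    swap
    · rw [Φ.E_top _ (by omega), mulVecLin_zero, LinearMap.range_zero]
      exact bot_le
    rw [← Φ.range_E_succ_mul_Astar_mul_E hk]
    rintro _ ⟨u, rfl⟩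
    have hx : Φ.Astar *ᵥ Φ.E k *ᵥ u ∈ W := hAstar _ (ih k (by omega) ⟨u, rfl⟩)
    have hsplit := Φ.sum_E_mulVec_Astar_mulVec_E hk u
    rw [Finset.sum_range_succ, ← eq_sub_iff_add_eq'] at hsplit
    rw [mulVecLin_apply, ← mulVec_mulVec, ← mulVec_mulVec, hsplit]
    exact W.sub_mem hx (W.sum_mem fun j hj => ih j (Finset.mem_range.mp hj) ⟨_, rfl⟩)

end LeonardSystem

namespace IsBalancedForm

variable {K : Type*} [Field K] {d d' ρ : ℕ} {Φ : LeonardSystem K d} {Φ' : LeonardSystem K d'}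
  {B : (Fin (d+1) → K) →ₗ[K] (Fin (d'+1) → K) →ₗ[K] K}

theorem apply_Estar_Estar_eq_zero (hB : IsBalancedForm Φ Φ' ρ B) {i j : ℕ} (hij : i ≠ j + ρ)
    (v : Fin (d+1) → K) (v' : Fin (d'+1) → K) :
    B (Φ.Estar i *ᵥ v) (Φ'.Estar j *ᵥ v') = 0 := by
  by_cases hi : i ≤ d
  · by_cases hj : j ≤ d'
    · exact hB.2.1 i j hi hj hij v v'
    · rw [Φ'.Estar_top j (by omega), zero_mulVec, map_zero]
  · rw [Φ.Estar_top i (by omega), zero_mulVec, map_zero, LinearMap.zero_apply]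

theorem apply_E_E_eq_zero_of_lt (hB : IsBalancedForm Φ Φ' ρ B) {i j : ℕ} (hij : i < j)
    (v : Fin (d+1) → K) (v' : Fin (d'+1) → K) :
    B (Φ.E i *ᵥ v) (Φ'.E j *ᵥ v') = 0 := by
  by_cases hi : i ≤ d
  · by_cases hj : j ≤ d'
    · exact hB.2.2 i j hi hj (Or.inl hij) v v'
    · rw [Φ'.E_top j (by omega), zero_mulVec, map_zero]
  · rw [Φ.E_top i (by omega), zero_mulVec, map_zero, LinearMap.zero_apply]

theorem apply_Estar_mulVec_eq_zero_of_lt (hB : IsBalancedForm Φ Φ' ρ B) {i : ℕ} (hi : i < ρ)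
    (v : Fin (d+1) → K) (w' : Fin (d'+1) → K) : B (Φ.Estar i *ᵥ v) w' = 0 := by
  rw [← Φ'.sum_Estar_mulVec w', map_sum]
  exact Finset.sum_eq_zero fun j _ => hB.apply_Estar_Estar_eq_zero (by omega) v w'

theorem apply_Estar_add_mulVec (hB : IsBalancedForm Φ Φ' ρ B) (j : ℕ)
    (v : Fin (d+1) → K) (w' : Fin (d'+1) → K) :
    B (Φ.Estar (j + ρ) *ᵥ v) w' = B v (Φ'.Estar j *ᵥ w') := by
  calc B (Φ.Estar (j + ρ) *ᵥ v) w' = B (Φ.Estar (j + ρ) *ᵥ v) (Φ'.Estar j *ᵥ w') := by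
        conv_lhs => rw [← Φ'.sum_Estar_mulVec w']
        rw [map_sum, Finset.sum_eq_single j
          (fun k _ hk => hB.apply_Estar_Estar_eq_zero (by omega) v w')]
        intro hj
        rw [Φ'.Estar_top j (by simpa using hj), zero_mulVec, map_zero]
    _ = B v (Φ'.Estar j *ᵥ w') := by
        conv_rhs => rw [← Φ.sum_Estar_mulVec v]
        rw [map_sum, LinearMap.sum_apply, Finset.sum_eq_single (j + ρ)
          (fun k _ hk => hB.apply_Estar_Estar_eq_zero hk v w')]
        intro hj
        rw [Φ.Estar_top _ (by simpa using hj), zero_mulVec, map_zero, LinearMap.zero_apply]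

theorem Estar_mulVec_mem_ker (hB : IsBalancedForm Φ Φ' ρ B) {v : Fin (d+1) → K}
    (hv : v ∈ LinearMap.ker B) (i : ℕ) : Φ.Estar i *ᵥ v ∈ LinearMap.ker B := by
  rw [LinearMap.mem_ker] at hv ⊢
  refine LinearMap.ext fun w' => ?_
  rcases lt_or_ge i ρ with hi | hi
  · exact hB.apply_Estar_mulVec_eq_zero_of_lt hi v w'
  · obtain ⟨j, rfl⟩ := Nat.exists_eq_add_of_le' hi
    rw [hB.apply_Estar_add_mulVec, hv, LinearMap.zero_apply, LinearMap.zero_apply]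

theorem Astar_mulVec_mem_ker (hB : IsBalancedForm Φ Φ' ρ B) {v : Fin (d+1) → K}
    (hv : v ∈ LinearMap.ker B) : Φ.Astar *ᵥ v ∈ LinearMap.ker B := by
  rw [Φ.Astar_mulVec_eq_sum]
  exact Submodule.sum_mem _ fun i _ => Submodule.smul_mem _ _ (hB.Estar_mulVec_mem_ker hv i)

theorem not_range_E_zero_le_ker (hB : IsBalancedForm Φ Φ' ρ B) :
    ¬ LinearMap.range (Φ.E 0).mulVecLin ≤ LinearMap.ker B := fun h =>
  hB.1 (LinearMap.ker_eq_top.mp (Φ.eq_top_of_range_E_zero_le h fun _ => hB.Astar_mulVec_mem_ker))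

theorem map_range_E_zero_le (hB : IsBalancedForm Φ Φ' ρ B)
    {Bp : (Fin (d'+1) → K) →ₗ[K] (Fin (d'+1) → K) →ₗ[K] K}
    (hnd : ∀ u, (∀ v, Bp u v = 0) → u = 0)
    (hinv : ∀ X ∈ Algebra.adjoin K {Φ'.A}, ∀ u v, Bp (X *ᵥ u) v = Bp u (X *ᵥ v))
    {proj : (Fin (d+1) → K) →ₗ[K] (Fin (d'+1) → K)} (hproj : ∀ v v', B v v' = Bp (proj v) v') :
    Submodule.map proj (LinearMap.range (Φ.E 0).mulVecLin) ≤
      LinearMap.range (Φ'.E 0).mulVecLin := by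
  rintro _ ⟨_, ⟨v, rfl⟩, rfl⟩
  refine Φ'.mem_range_E_of_forall_ne fun j hj => ?_
  by_cases hjd : j ≤ d'
  · refine hnd _ fun u => ?_
    rw [hinv _ (Φ'.E_mem_adjoin_A hjd), ← hproj]
    exact hB.apply_E_E_eq_zero_of_lt (Nat.pos_of_ne_zero hj) v u
  · rw [Φ'.E_top j (by omega), zero_mulVec]

theorem map_range_E_zero_ne_bot (hB : IsBalancedForm Φ Φ' ρ B)
    {Bp : (Fin (d'+1) → K) →ₗ[K] (Fin (d'+1) → K) →ₗ[K] K}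
    {proj : (Fin (d+1) → K) →ₗ[K] (Fin (d'+1) → K)} (hproj : ∀ v v', B v v' = Bp (proj v) v') :
    Submodule.map proj (LinearMap.range (Φ.E 0).mulVecLin) ≠ ⊥ := by
  refine fun h => hB.not_range_E_zero_le_ker fun _ hv => ?_
  have hzero : proj _ = 0 := (Submodule.mem_bot K).mp (h ▸ Submodule.mem_map_of_mem hv)
  exact LinearMap.ext fun v' => by rw [hproj, hzero, map_zero, LinearMap.zero_apply]

end IsBalancedForm

theorem stmt_10_general {K : Type*} [Field K] {d d' ρ : ℕ}
    (Φ : LeonardSystem K d) (Φ' : LeonardSystem K d')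
    (B : (Fin (d+1) → K) →ₗ[K] (Fin (d'+1) → K) →ₗ[K] K)
    (hB : IsBalancedForm Φ Φ' ρ B)
    (Bp : (Fin (d'+1) → K) →ₗ[K] (Fin (d'+1) → K) →ₗ[K] K)
    (hnd₂ : ∀ u, (∀ v, Bp u v = 0) → u = 0)
    (hinvA : ∀ X ∈ Algebra.adjoin K {Φ'.A}, ∀ u v, Bp (X *ᵥ u) v = Bp u (X *ᵥ v))
    (proj : (Fin (d+1) → K) →ₗ[K] (Fin (d'+1) → K))
    (hproj : ∀ v v', B v v' = Bp (proj v) v') :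
    Submodule.map proj (LinearMap.range (Φ.E 0).mulVecLin) =
      LinearMap.range (Φ'.E 0).mulVecLin ∧
    Submodule.map proj (LinearMap.range (Φ.E 0).mulVecLin) ≠ ⊥ := by
  have hne := hB.map_range_E_zero_ne_bot hproj
  refine ⟨Submodule.eq_of_le_of_finrank_le (hB.map_range_E_zero_le hnd₂ hinvA hproj) ?_, hne⟩
  rw [← rank, Φ'.rank_E (Nat.zero_le d'), Nat.one_le_iff_ne_zero, Ne, Submodule.finrank_eq_zero]
  exact hne

/-- If `(·|·) : V × V' → K` is `ρ`-balanced with respect to `Φ, Φ'` and `proj : V → V'` is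
defined by `(v|v') = ⟨proj v, v'⟩'` (where `⟨·,·⟩'` is the invariant nondegenerate form on
`V'`), then `proj(E_0 V) = E_0' V'`; in particular `proj(E_0 V) ≠ 0`. -/
theorem stmt_10 {K : Type*} [Field K] {d d' ρ : ℕ} (hdd : d' ≤ d) (hρ : ρ ≤ d - d')
    (Φ : LeonardSystem K d) (Φ' : LeonardSystem K d')
    (B : (Fin (d+1) → K) →ₗ[K] (Fin (d'+1) → K) →ₗ[K] K)
    (hB : IsBalancedForm Φ Φ' ρ B)
    (Bp : (Fin (d'+1) → K) →ₗ[K] (Fin (d'+1) → K) →ₗ[K] K)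
    (hnd₁ : ∀ v, (∀ u, Bp u v = 0) → v = 0)
    (hnd₂ : ∀ u, (∀ v, Bp u v = 0) → u = 0)
    (hinvA : ∀ X ∈ Algebra.adjoin K {Φ'.A}, ∀ u v, Bp (X *ᵥ u) v = Bp u (X *ᵥ v))
    (hinvAs : ∀ X ∈ Algebra.adjoin K {Φ'.Astar}, ∀ u v, Bp (X *ᵥ u) v = Bp u (X *ᵥ v))
    (proj : (Fin (d+1) → K) →ₗ[K] (Fin (d'+1) → K))
    (hproj : ∀ v v', B v v' = Bp (proj v) v') :
    Submodule.map proj (LinearMap.range (Φ.E 0).mulVecLin) =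
      LinearMap.range (Φ'.E 0).mulVecLin ∧
    Submodule.map proj (LinearMap.range (Φ.E 0).mulVecLin) ≠ ⊥ :=
  stmt_10_general Φ Φ' B hB Bp hnd₂ hinvA proj hproj
end

section
/- Let (·|·): V × V' → K be ρ-balanced with respect to Leonard systems Φ, Φ', and let σ : D* → D*' be the surjective algebra homomorphism determined by E_i*^σ = E_{i−ρ}*'. Then there exist scalars ξ*, ζ* ∈ K such that A*' = ξ* A*^σ + ζ* I'. Equivalently, θ_i*' = ξ* θ_{ρ+i}* + ζ* for 0 ≤ i ≤ d'. -/
/-!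
Let `M` be the matrix of the form. Condition (B1) makes `M` intertwine `A*` with `A*^σ`:
`A*ᵀ M = M A*^σ`. In bases adapted to the primitive idempotents `E_i`, `E_i'`, the matrices
`A*`, `A*'` become irreducible tridiagonal and (B2) makes the transformed `M` lower triangular.
Irreducibility forces its corner entry `m₀₀` to be nonzero (a zero first row would propagate
down through the intertwining relation), and the first row of that relation then shows that
`A*^σ`, in the `E'`-basis, vanishes in its first row beyond column `1`. A matrix commuting with
an irreducible tridiagonal matrix is determined by its first row, and `A*^σ` commutes with `A*'`
(both are diagonal in the `E*'`-basis), so `A*^σ = ξ A*' + ζ I'`. Since `θ*` is injective this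
affine relation between dual eigenvalues can be inverted.
-/

open Matrix

namespace Matrix

variable {R K : Type*}

def IsUnreducedLowerHessenberg {n : ℕ} [Zero R] (H : Matrix (Fin n) (Fin n) R) : Prop :=
  (∀ i k : Fin n, (i : ℕ) + 1 < k → H i k = 0) ∧
    ∀ i k : Fin n, (i : ℕ) + 1 = k → H i k ≠ 0

namespace IsUnreducedLowerHessenberg

variable [Semiring R] [NoZeroDivisors R]

-- Row `r` of `H * Y = Y * Z` expresses row `r + 1` of `Y` through the rows above it.
theorem eq_zero_of_mul_eq_mul {n : ℕ} {H : Matrix (Fin n) (Fin n) R}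
    (hH : H.IsUnreducedLowerHessenberg) {α : Type*} [Fintype α]
    {Y : Matrix (Fin n) α R} {Z : Matrix α α R} (hYZ : H * Y = Y * Z)
    (h0 : ∀ (i : Fin n) j, (i : ℕ) = 0 → Y i j = 0) : Y = 0 := by
  suffices h : ∀ r, ∀ i : Fin n, (i : ℕ) ≤ r → ∀ j, Y i j = 0 by
    ext i j; exact h i i le_rfl j
  intro r
  induction r with
  | zero => exact fun i hi j => h0 i j (Nat.le_zero.mp hi)
  | succ r ih =>
    intro i hi j
    rcases Nat.lt_or_ge r i with hri | hir
    · let i' : Fin n := ⟨r, by omega⟩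
      have hrow : (H * Y) i' j = (Y * Z) i' j := by rw [hYZ]
      have hleft : (H * Y) i' j = H i' i * Y i j := by
        rw [mul_apply]
        refine Finset.sum_eq_single i (fun k _ hki => ?_) (absurd (Finset.mem_univ i))
        rcases Nat.lt_or_ge r k with hrk | hkr
        · rw [hH.1 i' k (by simp [i']; omega), zero_mul]
        · rw [ih k hkr, mul_zero]
      have hright : (Y * Z) i' j = 0 :=
        Finset.sum_eq_zero fun k _ => by simp only [ih i' le_rfl, zero_mul]
      rw [hleft, hright] at hrow
      exact (mul_eq_zero.mp hrow).resolve_left (hH.2 i' i (by simp [i']; omega))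
    · exact ih i hir j

theorem apply_zero_eq_zero_of_mul_eq_mul {n : ℕ} {H : Matrix (Fin (n + 1)) (Fin (n + 1)) R}
    (hH : H.IsUnreducedLowerHessenberg) {n' : ℕ} {m : Matrix (Fin (n + 1)) (Fin (n' + 1)) R}
    (hm : m ≠ 0) (hband : ∀ (i : Fin (n + 1)) (j : Fin (n' + 1)), (i : ℕ) < j → m i j = 0)
    {X : Matrix (Fin (n' + 1)) (Fin (n' + 1)) R} (hmX : H * m = m * X)
    (j : Fin (n' + 1)) (hj : 2 ≤ (j : ℕ)) : X 0 j = 0 := by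
  have hm00 : m 0 0 ≠ 0 := by
    refine fun h => hm (hH.eq_zero_of_mul_eq_mul hmX fun i k hi => ?_)
    obtain rfl : i = 0 := Fin.ext hi
    rcases Nat.eq_zero_or_pos (k : ℕ) with hk | hk
    · rwa [show k = 0 from Fin.ext hk]
    · exact hband 0 k hk
  have hentry : (H * m) 0 j = (m * X) 0 j := by rw [hmX]
  have hleft : (H * m) 0 j = 0 := by
    rw [mul_apply]
    refine Finset.sum_eq_zero fun k _ => ?_
    rcases Nat.lt_or_ge (k : ℕ) 2 with hk | hk
    · rw [hband k j (by omega), mul_zero]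
    · rw [hH.1 0 k (by simp; omega), zero_mul]
  have hright : (m * X) 0 j = m 0 0 * X 0 j := by
    rw [mul_apply]
    refine Finset.sum_eq_single 0 (fun k _ hk => ?_) (absurd (Finset.mem_univ 0))
    rw [hband 0 k (Fin.pos_iff_ne_zero.mpr hk), zero_mul]
  rw [hleft, hright] at hentry
  exact (mul_eq_zero.mp hentry.symm).resolve_left hm00

-- `X - ξ • T - ζ • 1` commutes with `T`, and `ξ, ζ` are chosen to kill its first row.
theorem exists_eq_smul_add_smul_one_of_commute [Field K] {n : ℕ}
    {T X : Matrix (Fin (n + 1)) (Fin (n + 1)) K} (hT : T.IsUnreducedLowerHessenberg)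
    (hXT : Commute X T) (hX : ∀ j : Fin (n + 1), 2 ≤ (j : ℕ) → X 0 j = 0) :
    ∃ ξ ζ : K, X = ξ • T + ζ • 1 := by
  obtain ⟨ξ, hξ⟩ : ∃ ξ : K, ∀ j : Fin (n + 1), (j : ℕ) = 1 → X 0 j = ξ * T 0 j := by
    by_cases hn : n = 0
    · exact ⟨0, fun j hj => by omega⟩
    · refine ⟨X 0 ⟨1, by omega⟩ / T 0 ⟨1, by omega⟩, fun j hj => ?_⟩
      rw [show j = ⟨1, by omega⟩ from Fin.ext hj, div_mul_cancel₀ _ (hT.2 _ _ (by simp))]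
  set ζ := X 0 0 - ξ * T 0 0
  refine ⟨ξ, ζ, sub_eq_zero.mp (hT.eq_zero_of_mul_eq_mul (Z := T) ?_ fun i j hi => ?_)⟩
  · exact (hXT.sub_left ((Commute.refl T).smul_left ξ |>.add_left
      ((Commute.one_left T).smul_left ζ))).symm.eq
  · obtain rfl : i = 0 := Fin.ext hi
    rcases Nat.lt_trichotomy (j : ℕ) 1 with hj | hj | hj
    · rw [show j = 0 from Fin.ext (by simp; omega)]
      simp [ζ]
    · have h0j : (0 : Fin (n + 1)) ≠ j := Fin.ne_of_val_ne (by simp; omega)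
      simp [hξ j hj, one_apply_ne h0j]
    · have h0j : (0 : Fin (n + 1)) ≠ j := Fin.ne_of_val_ne (by simp; omega)
      simp [hX j hj, hT.1 0 j (by simp; omega), one_apply_ne h0j]

end IsUnreducedLowerHessenberg

theorem conj_eq_zero_iff [CommRing R] {m n : Type*} [Fintype m] [DecidableEq m] [Fintype n]
    [DecidableEq n] {P : Matrix m m R} {P' : Matrix n n R} (hP : IsUnit P.det)
    (hP' : IsUnit P'.det) (X : Matrix m n R) : P⁻¹ * X * P' = 0 ↔ X = 0 := by
  refine ⟨fun h => ?_, fun h => by rw [h, Matrix.mul_zero, Matrix.zero_mul]⟩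
  rw [← mul_nonsing_inv_cancel_left P X hP, ← mul_nonsing_inv_cancel_right P' (P⁻¹ * X) hP',
    h, Matrix.zero_mul, Matrix.mul_zero]

theorem mul_mul_eq_zero_iff_conj_apply_eq_zero [CommRing R] {m n : Type*} [Fintype m]
    [DecidableEq m] [Fintype n] [DecidableEq n] {P : Matrix m m R} {P' : Matrix n n R}
    (hP : IsUnit P.det) (hP' : IsUnit P'.det) {E : Matrix m m R} {F : Matrix n n R} {i : m}
    {j : n} (hE : E * P = P * single i i 1) (hF : F * P' = P' * single j j 1)
    (X : Matrix m n R) : E * X * F = 0 ↔ (P⁻¹ * X * P') i j = 0 := by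
  have hPE : P⁻¹ * E = single i i 1 * P⁻¹ := by
    calc P⁻¹ * E = P⁻¹ * (E * P) * P⁻¹ := by
          rw [Matrix.mul_assoc, Matrix.mul_assoc, mul_nonsing_inv _ hP, Matrix.mul_one]
      _ = single i i 1 * P⁻¹ := by rw [hE, nonsing_inv_mul_cancel_left P _ hP]
  have hconj : P⁻¹ * (E * X * F) * P' = single i j ((P⁻¹ * X * P') i j) := by
    calc P⁻¹ * (E * X * F) * P' = (P⁻¹ * E) * X * (F * P') := by simp only [Matrix.mul_assoc]
      _ = single i i (1 : R) * (P⁻¹ * X * P') * single j j (1 : R) := by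
          rw [hPE, hF]; simp only [Matrix.mul_assoc]
      _ = single i j ((P⁻¹ * X * P') i j) := by rw [single_mul_mul_single, one_mul, mul_one]
  rw [← conj_eq_zero_iff hP hP', hconj]
  exact ⟨fun h => by simpa using congrFun (congrFun h i) j, fun h => by rw [h, single_zero]⟩

theorem isUnreducedLowerHessenberg_conj [CommRing R] {n : ℕ}
    {E : Fin n → Matrix (Fin n) (Fin n) R} {P : Matrix (Fin n) (Fin n) R} (hP : IsUnit P.det)
    (hPE : ∀ i, E i * P = P * single i i 1) {X : Matrix (Fin n) (Fin n) R}
    (hfar : ∀ i k : Fin n, (i : ℕ) + 1 < k → E i * X * E k = 0)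
    (hnear : ∀ i k : Fin n, (i : ℕ) + 1 = k → E i * X * E k ≠ 0) :
    (P⁻¹ * X * P).IsUnreducedLowerHessenberg :=
  ⟨fun i k h =>
      (mul_mul_eq_zero_iff_conj_apply_eq_zero hP hP (hPE i) (hPE k) X).mp (hfar i k h),
    fun i k h =>
      (mul_mul_eq_zero_iff_conj_apply_eq_zero hP hP (hPE i) (hPE k) X).not.mp (hnear i k h)⟩

theorem exists_isUnit_det_mul_single_of_orthogonalIdempotents [Field K] {ι : Type*}
    [Fintype ι] [DecidableEq ι] {E : ι → Matrix ι ι K} (hE : OrthogonalIdempotents E)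
    (hne : ∀ i, E i ≠ 0) :
    ∃ P : Matrix ι ι K, IsUnit P.det ∧ ∀ i, E i * P = P * single i i 1 := by
  -- Nonzero columns of the `E i` are simultaneous eigenvectors, hence independent.
  obtain ⟨x, hx0, hEx⟩ : ∃ x : ι → ι → K,
      (∀ i, x i ≠ 0) ∧ ∀ i j, E j *ᵥ x i = if i = j then x i else 0 := by
    have hcol : ∀ i, ∃ b, (E i).col b ≠ 0 := by
      intro i
      by_contra! h
      exact hne i (Matrix.ext fun r b => congrFun (h b) r)
    choose b hb using hcol
    refine ⟨fun i => (E i).col (b i), hb, fun i j => ?_⟩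
    simp only [← mulVec_single_one, mulVec_mulVec, hE.mul_eq]
    by_cases h : i = j
    · simp [h]
    · simp only [h, Ne.symm h, if_false, zero_mulVec]
  set P : Matrix ι ι K := Matrix.of fun r i => x i r
  have hPcol : ∀ i, P.col i = x i := fun _ => rfl
  have hP : IsUnit P := by
    refine linearIndependent_cols_iff_isUnit.mp
      (Fintype.linearIndependent_iff.mpr fun g hg j => ?_)
    have := congrArg (E j *ᵥ ·) hg
    simp only [hPcol, mulVec_sum, mulVec_smul, hEx, smul_ite, smul_zero, Finset.sum_ite_eq',
      Finset.mem_univ, if_true, mulVec_zero, smul_eq_zero] at this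
    exact this.resolve_right (hx0 j)
  refine ⟨P, (isUnit_iff_isUnit_det P).mp hP, fun i => ?_⟩
  ext r k
  have hcol : (E i * P) r k = (E i *ᵥ x k) r := rfl
  rw [hcol, hEx k i]
  by_cases h : k = i
  · subst h; simp [P, mul_single_apply_same]
  · simp [h, mul_single_apply_of_ne]

end Matrix

theorem OrthogonalIdempotents.transpose {R n ι : Type*} [CommSemiring R] [Fintype n]
    [DecidableEq n] {E : ι → Matrix n n R} (hE : OrthogonalIdempotents E) :
    OrthogonalIdempotents fun i => (E i)ᵀ :=
  ⟨fun i => by rw [IsIdempotentElem, ← transpose_mul, hE.idem i],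
    fun i j hij => show (E i)ᵀ * (E j)ᵀ = 0 by
      rw [← transpose_mul, hE.ortho hij.symm, transpose_zero]⟩

theorem exists_eq_mul_add_of_injOn {ι K : Type*} [Field K] {f g : ι → K} {s : Set ι}
    {ξ ζ : K} (hg : Set.InjOn g s) (h : ∀ j ∈ s, g j = ξ * f j + ζ) :
    ∃ ξ' ζ' : K, ∀ j ∈ s, f j = ξ' * g j + ζ' := by
  by_cases hξ : ξ = 0
  · rcases s.eq_empty_or_nonempty with rfl | ⟨a, ha⟩
    · exact ⟨0, 0, by simp⟩
    refine ⟨0, f a, fun j hj => ?_⟩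
    rw [hg hj ha (by rw [h j hj, h a ha, hξ, zero_mul, zero_mul])]
    ring
  · refine ⟨ξ⁻¹, -ζ / ξ, fun j hj => ?_⟩
    rw [h j hj]
    field_simp
    ring

namespace LeonardSystem

variable {K : Type*} [Field K] {d : ℕ} (Φ : LeonardSystem K d)

theorem Astar_eq_sum :
    Φ.Astar = ∑ i ∈ Finset.range (d + 1), Φ.thetastar i • Φ.Estar i := by
  conv_lhs => rw [← Matrix.mul_one Φ.Astar, ← Φ.sumEstar, Finset.mul_sum]
  exact Finset.sum_congr rfl fun i hi =>
    Φ.AstarEstar i (Nat.lt_succ_iff.mp (Finset.mem_range.mp hi))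

theorem sum_smul_Estar_mul_Estar (c : ℕ → K) {l : ℕ} (hl : l ≤ d) :
    (∑ j ∈ Finset.range (d + 1), c j • Φ.Estar j) * Φ.Estar l = c l • Φ.Estar l := by
  simp [Finset.sum_mul, Φ.EstarEstar, Nat.lt_succ_iff.mpr hl]

theorem commute_Estar_Estar (i j : ℕ) : Commute (Φ.Estar i) (Φ.Estar j) := by
  rw [Commute, SemiconjBy, Φ.EstarEstar, Φ.EstarEstar]
  by_cases h : i = j
  · rw [h]
  · rw [if_neg h, if_neg (Ne.symm h)]

theorem commute_sum_smul_Estar (c c' : ℕ → K) :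
    Commute (∑ j ∈ Finset.range (d + 1), c j • Φ.Estar j)
      (∑ j ∈ Finset.range (d + 1), c' j • Φ.Estar j) :=
  Commute.sum_left _ _ _ fun i _ => Commute.sum_right _ _ _ fun j _ =>
    ((Φ.commute_Estar_Estar i j).smul_left _).smul_right _

theorem apply_eq_of_sum_smul_Estar_eq {c : ℕ → K} {ξ ζ : K}
    (h : ∑ j ∈ Finset.range (d + 1), c j • Φ.Estar j = ξ • Φ.Astar + ζ • 1) {l : ℕ}
    (hl : l ≤ d) : c l = ξ * Φ.thetastar l + ζ := by
  have hl' := congrArg (· * Φ.Estar l) h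
  simp only [Φ.sum_smul_Estar_mul_Estar c hl, Matrix.add_mul, Matrix.smul_mul,
    Φ.AstarEstar l hl, Matrix.one_mul, smul_smul, ← add_smul] at hl'
  exact smul_left_injective K (Φ.Estar_ne l hl) hl'

theorem Astar_eq_smul_sum_add_smul_one {c : ℕ → K} {ξ ζ : K}
    (h : ∀ j ≤ d, Φ.thetastar j = ξ * c j + ζ) :
    Φ.Astar = ξ • (∑ j ∈ Finset.range (d + 1), c j • Φ.Estar j) + ζ • 1 := by
  rw [Φ.Astar_eq_sum, ← Φ.sumEstar, Finset.smul_sum, Finset.smul_sum,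
    ← Finset.sum_add_distrib]
  refine Finset.sum_congr rfl fun j hj => ?_
  rw [h j (Nat.lt_succ_iff.mp (Finset.mem_range.mp hj)), add_smul, smul_smul]

theorem orthogonalIdempotents_E_s12 : OrthogonalIdempotents fun i : Fin (d + 1) => Φ.E i :=
  ⟨fun i => by rw [IsIdempotentElem, Φ.EE, if_pos rfl],
    fun i j hij => by simp only [Φ.EE, if_neg (Fin.val_ne_of_ne hij)]⟩

theorem isUnreducedLowerHessenberg_conj_Astar {P : Matrix (Fin (d + 1)) (Fin (d + 1)) K}
    (hP : IsUnit P.det) (hPE : ∀ i : Fin (d + 1), Φ.E i * P = P * single i i 1) :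
    (P⁻¹ * Φ.Astar * P).IsUnreducedLowerHessenberg :=
  isUnreducedLowerHessenberg_conj hP hPE
    (fun i k h => Φ.dtrid_far i k i.is_le k.is_le (Or.inl h))
    (fun i k h => Φ.dtrid_near i k i.is_le k.is_le (Or.inl h))

theorem isUnreducedLowerHessenberg_conj_transpose_Astar
    {P : Matrix (Fin (d + 1)) (Fin (d + 1)) K}
    (hP : IsUnit P.det) (hPE : ∀ i : Fin (d + 1), (Φ.E i)ᵀ * P = P * single i i 1) :
    (P⁻¹ * Φ.Astarᵀ * P).IsUnreducedLowerHessenberg := by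
  have hT : ∀ i k : Fin (d + 1),
      (Φ.E i)ᵀ * Φ.Astarᵀ * (Φ.E k)ᵀ = (Φ.E k * Φ.Astar * Φ.E i)ᵀ :=
    fun i k => by rw [transpose_mul, transpose_mul, Matrix.mul_assoc]
  refine isUnreducedLowerHessenberg_conj hP hPE (fun i k h => ?_) (fun i k h => ?_)
  · rw [hT, transpose_eq_zero]
    exact Φ.dtrid_far k i k.is_le i.is_le (Or.inr h)
  · rw [hT, Ne, transpose_eq_zero]
    exact Φ.dtrid_near k i k.is_le i.is_le (Or.inr h)

end LeonardSystem

section BalancedForm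

variable {K : Type*} [Field K] {d d' : ℕ} {Φ : LeonardSystem K d} {Φ' : LeonardSystem K d'}
  {ρ : ℕ} {B : (Fin (d + 1) → K) →ₗ[K] (Fin (d' + 1) → K) →ₗ[K] K}

-- `A*^σ`, the image of `A*` under `σ : E_i* ↦ E_{i-ρ}*'`.
def sigmaAstar (Φ : LeonardSystem K d) (Φ' : LeonardSystem K d') (ρ : ℕ) :
    Matrix (Fin (d' + 1)) (Fin (d' + 1)) K :=
  ∑ j ∈ Finset.range (d' + 1), Φ.thetastar (ρ + j) • Φ'.Estar j

theorem transpose_mul_toMatrix₂'_eq_of_apply_mulVec {m n : Type*} [Fintype m] [DecidableEq m]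
    [Fintype n] [DecidableEq n] {B : (m → K) →ₗ[K] (n → K) →ₗ[K] K} {X : Matrix m m K}
    {Y : Matrix n n K} (h : ∀ v w, B (X *ᵥ v) w = B v (Y *ᵥ w)) :
    Xᵀ * LinearMap.toMatrix₂' K B = LinearMap.toMatrix₂' K B * Y := by
  rw [← LinearMap.toMatrix'_toLin' X, ← LinearMap.toMatrix'_toLin' Y,
    ← LinearMap.toMatrix₂'_comp, ← LinearMap.toMatrix₂'_compl₂]
  exact congrArg _ (LinearMap.ext₂ fun v w => by simp [h])

theorem transpose_mul_toMatrix₂'_mul_eq_zero {m n : Type*} [Fintype m] [DecidableEq m]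
    [Fintype n] [DecidableEq n] {B : (m → K) →ₗ[K] (n → K) →ₗ[K] K} {X : Matrix m m K}
    {Y : Matrix n n K} (h : ∀ v w, B (X *ᵥ v) (Y *ᵥ w) = 0) :
    Xᵀ * LinearMap.toMatrix₂' K B * Y = 0 := by
  rw [← LinearMap.toMatrix'_toLin' X, ← LinearMap.toMatrix'_toLin' Y,
    ← LinearMap.toMatrix₂'_compl₁₂, LinearEquiv.map_eq_zero_iff]
  exact LinearMap.ext₂ fun v w => by simp [h]

theorem IsBalancedForm.apply_Astar_mulVec (hB : IsBalancedForm Φ Φ' ρ B)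
    (v : Fin (d + 1) → K) (w : Fin (d' + 1) → K) :
    B (Φ.Astar *ᵥ v) w = B v (sigmaAstar Φ Φ' ρ *ᵥ w) := by
  have hterm : ∀ i ∈ Finset.range (d + 1), ∀ j ∈ Finset.range (d' + 1),
      Φ.thetastar i * B (Φ.Estar i *ᵥ v) (Φ'.Estar j *ᵥ w) =
        Φ.thetastar (ρ + j) * B (Φ.Estar i *ᵥ v) (Φ'.Estar j *ᵥ w) := by
    intro i hi j hj
    by_cases hij : i = j + ρ
    · rw [hij, add_comm]
    · rw [hB.2.1 i j (Nat.lt_succ_iff.mp (Finset.mem_range.mp hi))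
        (Nat.lt_succ_iff.mp (Finset.mem_range.mp hj)) hij, mul_zero, mul_zero]
  have hv : ∑ i ∈ Finset.range (d + 1), Φ.Estar i *ᵥ v = v := by
    rw [← sum_mulVec, Φ.sumEstar, one_mulVec]
  have hw : ∑ j ∈ Finset.range (d' + 1), Φ'.Estar j *ᵥ w = w := by
    rw [← sum_mulVec, Φ'.sumEstar, one_mulVec]
  calc B (Φ.Astar *ᵥ v) w
      = ∑ i ∈ Finset.range (d + 1), ∑ j ∈ Finset.range (d' + 1),
          Φ.thetastar i * B (Φ.Estar i *ᵥ v) (Φ'.Estar j *ᵥ w) := by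
        conv_lhs => rw [Φ.Astar_eq_sum, ← hw]
        simp only [sum_mulVec, smul_mulVec, map_sum, map_smul, LinearMap.sum_apply,
          LinearMap.smul_apply, smul_eq_mul]
        exact Finset.sum_comm
    _ = ∑ i ∈ Finset.range (d + 1), ∑ j ∈ Finset.range (d' + 1),
          Φ.thetastar (ρ + j) * B (Φ.Estar i *ᵥ v) (Φ'.Estar j *ᵥ w) :=
        Finset.sum_congr rfl fun i hi => Finset.sum_congr rfl (hterm i hi)
    _ = B v (sigmaAstar Φ Φ' ρ *ᵥ w) := by
        conv_rhs => rw [sigmaAstar, ← hv]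
        simp only [sum_mulVec, smul_mulVec, map_sum, map_smul, LinearMap.sum_apply, smul_eq_mul,
          Finset.mul_sum]
        exact Finset.sum_comm

theorem IsBalancedForm.exists_sigmaAstar_eq (hB : IsBalancedForm Φ Φ' ρ B) :
    ∃ ξ ζ : K, sigmaAstar Φ Φ' ρ = ξ • Φ'.Astar + ζ • 1 := by
  -- `M` pairs `E_iᵀ` on the left with `E_j'` on the right, so the left basis must
  -- diagonalize the transposed idempotents.
  obtain ⟨R, hR, hRE⟩ := exists_isUnit_det_mul_single_of_orthogonalIdempotents
    Φ.orthogonalIdempotents_E_s12.transpose fun i => by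
      rw [Ne, transpose_eq_zero]; exact Φ.E_ne i i.is_le
  obtain ⟨Q, hQ, hQE⟩ := exists_isUnit_det_mul_single_of_orthogonalIdempotents
    Φ'.orthogonalIdempotents_E_s12 fun j => Φ'.E_ne j j.is_le
  set M := LinearMap.toMatrix₂' K B
  set S := sigmaAstar Φ Φ' ρ
  have hm : R⁻¹ * M * Q ≠ 0 :=
    (conj_eq_zero_iff hR hQ M).not.mpr ((LinearMap.toMatrix₂' K).map_ne_zero_iff.mpr hB.1)
  have hband :
      ∀ (i : Fin (d + 1)) (j : Fin (d' + 1)), (i : ℕ) < j → (R⁻¹ * M * Q) i j = 0 :=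
    fun i j hij => (mul_mul_eq_zero_iff_conj_apply_eq_zero hR hQ (hRE i) (hQE j) M).mp
      (transpose_mul_toMatrix₂'_mul_eq_zero (hB.2.2 i j i.is_le j.is_le (Or.inl hij)))
  have hrel :
      (R⁻¹ * Φ.Astarᵀ * R) * (R⁻¹ * M * Q) = (R⁻¹ * M * Q) * (Q⁻¹ * S * Q) := by
    simp only [Matrix.mul_assoc, mul_nonsing_inv_cancel_left _ _ hR,
      mul_nonsing_inv_cancel_left _ _ hQ]
    rw [← Matrix.mul_assoc Φ.Astarᵀ, ← Matrix.mul_assoc M,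
      transpose_mul_toMatrix₂'_eq_of_apply_mulVec hB.apply_Astar_mulVec]
  have hcomm : Commute (Q⁻¹ * S * Q) (Q⁻¹ * Φ'.Astar * Q) := by
    have hSA : Commute S Φ'.Astar := by
      rw [Φ'.Astar_eq_sum]; exact Φ'.commute_sum_smul_Estar _ _
    simp only [Commute, SemiconjBy, Matrix.mul_assoc, mul_nonsing_inv_cancel_left _ _ hQ]
    rw [← Matrix.mul_assoc S, hSA.eq, Matrix.mul_assoc]
  have hrow := (Φ.isUnreducedLowerHessenberg_conj_transpose_Astar hR hRE
    ).apply_zero_eq_zero_of_mul_eq_mul hm hband hrel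
  obtain ⟨ξ, ζ, h⟩ := (Φ'.isUnreducedLowerHessenberg_conj_Astar hQ hQE
    ).exists_eq_smul_add_smul_one_of_commute hcomm hrow
  refine ⟨ξ, ζ, sub_eq_zero.mp ((conj_eq_zero_iff hQ hQ _).mp ?_)⟩
  rw [Matrix.mul_sub, Matrix.sub_mul, h]
  simp [Matrix.mul_add, Matrix.add_mul, nonsing_inv_mul _ hQ]

end BalancedForm

/-- If `(·|·)` is `ρ`-balanced with respect to `Φ, Φ'`, and `σ : D* → D*'` is the algebra
homomorphism with `E_i*^σ = E_{i−ρ}*'` (so that `A*^σ = ∑_{j=0}^{d'} θ*_{ρ+j} E_j*'`), then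
there are `ξ*, ζ* ∈ K` with `A*' = ξ* A*^σ + ζ* I'`; equivalently
`θ_i*' = ξ* θ*_{ρ+i} + ζ*` for `0 ≤ i ≤ d'`. -/
theorem stmt_12 {K : Type*} [Field K] {d d' ρ : ℕ} (hdd : d' ≤ d) (hρ : ρ ≤ d - d')
    (Φ : LeonardSystem K d) (Φ' : LeonardSystem K d')
    (B : (Fin (d+1) → K) →ₗ[K] (Fin (d'+1) → K) →ₗ[K] K)
    (hB : IsBalancedForm Φ Φ' ρ B) :
    ∃ ξ ζ : K,
      Φ'.Astar = ξ • (∑ j ∈ Finset.range (d' + 1), Φ.thetastar (ρ + j) • Φ'.Estar j) +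
        ζ • (1 : Matrix (Fin (d'+1)) (Fin (d'+1)) K) ∧
      ∀ i ≤ d', Φ'.thetastar i = ξ * Φ.thetastar (ρ + i) + ζ := by
  obtain ⟨ξ, ζ, hσ⟩ := hB.exists_sigmaAstar_eq
  have hθ : ∀ j ≤ d', Φ.thetastar (ρ + j) = ξ * Φ'.thetastar j + ζ :=
    fun j hj => Φ'.apply_eq_of_sum_smul_Estar_eq hσ hj
  have hinj : Set.InjOn (fun j => Φ.thetastar (ρ + j)) (Set.Iic d') :=
    Φ.thetastar_inj.comp (add_right_injective ρ).injOn fun j hj => by simp at hj ⊢; omega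
  obtain ⟨ξ', ζ', hθ'⟩ := exists_eq_mul_add_of_injOn hinj hθ
  exact ⟨ξ', ζ', Φ'.Astar_eq_smul_sum_add_smul_one hθ', hθ'⟩
end

section
/- Let Φ be a Leonard system with parameter array ({θ_i}; {θ_i*}; {φ_i}; {ϕ_i}), and define the dual switching element S* = Σ_{ℓ=0}^d (ϕ_1⋯ϕ_ℓ)/(φ_1⋯φ_ℓ) E_ℓ*. Then S* E_0 V = E_d V. -/
/-!
Let `p_0, …, p_d` be a split basis of `Φ` (`A p_i = θ_i p_i + p_{i+1}`,
`A* p_i = θ*_i p_i + φ_i p_{i-1}`) and `q_0, …, q_d` one of `Φ^⇓`. The `A`-eigenvectors `p_d` and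
`q_d` span `E_d V` and `E_0 V`. Because `A*` lowers a split basis, `E*_ℓ p_m = 0` for `m < ℓ` and
`E*_ℓ p_m = ∏_{ℓ<j≤m} φ_j/(θ*_ℓ-θ*_j) · E*_ℓ p_ℓ` for `m ≥ ℓ`, and similarly for `q` with `ϕ`.
The `θ*_0`-eigenspace of `A*` is a line, so `q_0 = s p_0`; as `A` raises both bases and is
tridiagonal with respect to the `E*_i`, `q_ℓ - s p_ℓ ∈ E*_0 V + ⋯ + E*_{ℓ-1} V`, whence
`E*_ℓ q_ℓ = s E*_ℓ p_ℓ`. Comparing `E*_ℓ`-components gives `S* q_d = s (ϕ_1⋯ϕ_d)/(φ_1⋯φ_d) p_d`.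
-/

open Matrix

/-- Lower bidiagonal matrix with diagonal `θ_0, …, θ_d` and all subdiagonal entries `1`. -/
def lowerBidiag {K : Type*} [Field K] (d : ℕ) (θ : ℕ → K) : Matrix (Fin (d+1)) (Fin (d+1)) K :=
  Matrix.of fun i j => if (i : ℕ) = (j : ℕ) then θ (i : ℕ)
    else if (j : ℕ) + 1 = (i : ℕ) then 1 else 0

/-- Upper bidiagonal matrix with diagonal `θ*_0, …, θ*_d` and superdiagonal entries
`φ_1, …, φ_d` (the `(i, i+1)` entry is `φ_{i+1}`). -/
def upperBidiag {K : Type*} [Field K] (d : ℕ) (θs φ : ℕ → K) : Matrix (Fin (d+1)) (Fin (d+1)) K :=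
  Matrix.of fun i j => if (i : ℕ) = (j : ℕ) then θs (i : ℕ)
    else if (i : ℕ) + 1 = (j : ℕ) then φ (j : ℕ) else 0

/-- `(φ_i)_{i=1}^d`, `(ϕ_i)_{i=1}^d` form the split-parameter part of the parameter array of
the Leonard system `Φ`: in some basis `A`, `A*` take the split (bidiagonal) form with diagonal
entries `θ_i`, resp. `θ*_i`, subdiagonal entries `1` and superdiagonal entries `φ_i`; and `ϕ`
is the corresponding sequence for `Φ^⇓` (i.e. for the reversed eigenvalue ordering). -/
def HasParameterArray {K : Type*} [Field K] {d : ℕ} (Φ : LeonardSystem K d)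
    (φ ϕ : ℕ → K) : Prop :=
  (∃ P : Matrix (Fin (d+1)) (Fin (d+1)) K, IsUnit P ∧
    Φ.A * P = P * lowerBidiag d Φ.theta ∧
    Φ.Astar * P = P * upperBidiag d Φ.thetastar φ) ∧
  (∃ Q : Matrix (Fin (d+1)) (Fin (d+1)) K, IsUnit Q ∧
    Φ.A * Q = Q * lowerBidiag d (fun i => Φ.theta (d - i)) ∧
    Φ.Astar * Q = Q * upperBidiag d Φ.thetastar ϕ)

open Finset

section

variable {K : Type*} [Field K] {d : ℕ}

def natBasisVec (d j : ℕ) : Fin (d+1) → K := fun i => if (i : ℕ) = j then 1 else 0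

/-- Column `j` of `R`, for a natural number `j`; it is `0` when `j > d`. -/
def natCol (R : Matrix (Fin (d+1)) (Fin (d+1)) K) (j : ℕ) : Fin (d+1) → K :=
  R *ᵥ natBasisVec d j

theorem natBasisVec_of_lt {j : ℕ} (hj : d < j) : natBasisVec d j = (0 : Fin (d+1) → K) := by
  funext i
  simp only [natBasisVec, Pi.zero_apply, ite_eq_right_iff]
  omega

theorem natBasisVec_val (i : Fin (d+1)) : natBasisVec d i = (Pi.single i 1 : Fin (d+1) → K) := by
  funext k
  rw [Pi.single_apply]
  simp only [natBasisVec, Fin.val_inj]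

theorem mulVec_natBasisVec (M : Matrix (Fin (d+1)) (Fin (d+1)) K) {j : ℕ} (hj : j ≤ d) :
    M *ᵥ natBasisVec d j = M.col ⟨j, Nat.lt_succ_of_le hj⟩ := by
  rw [← mulVec_single_one, ← natBasisVec_val]

theorem lowerBidiag_mulVec_natBasisVec (μ : ℕ → K) {j : ℕ} (hj : j ≤ d) :
    lowerBidiag d μ *ᵥ natBasisVec d j = μ j • natBasisVec d j + natBasisVec d (j+1) := by
  rw [mulVec_natBasisVec _ hj]
  funext i
  simp only [col_apply, lowerBidiag, of_apply, natBasisVec, Pi.add_apply, Pi.smul_apply,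
    smul_eq_mul]
  split_ifs <;> first | contradiction | omega | simp [*]

theorem upperBidiag_mulVec_natBasisVec_zero (θs ψ : ℕ → K) :
    upperBidiag d θs ψ *ᵥ natBasisVec d 0 = θs 0 • natBasisVec d 0 := by
  rw [mulVec_natBasisVec _ (Nat.zero_le d)]
  funext i
  simp only [col_apply, upperBidiag, of_apply, natBasisVec, Pi.smul_apply, smul_eq_mul]
  split_ifs <;> first | contradiction | omega | simp [*]

theorem upperBidiag_mulVec_natBasisVec_succ (θs ψ : ℕ → K) {j : ℕ} (hj : j + 1 ≤ d) :
    upperBidiag d θs ψ *ᵥ natBasisVec d (j+1)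
      = θs (j+1) • natBasisVec d (j+1) + ψ (j+1) • natBasisVec d j := by
  rw [mulVec_natBasisVec _ hj]
  funext i
  simp only [col_apply, upperBidiag, of_apply, natBasisVec, Pi.add_apply, Pi.smul_apply,
    smul_eq_mul]
  split_ifs <;> first | contradiction | omega | simp [*]

variable {R X : Matrix (Fin (d+1)) (Fin (d+1)) K}

theorem natCol_of_lt {j : ℕ} (hj : d < j) : natCol R j = 0 := by
  rw [natCol, natBasisVec_of_lt hj, mulVec_zero]

theorem natCol_ne_zero (hR : IsUnit R) {j : ℕ} (hj : j ≤ d) : natCol R j ≠ 0 := by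
  intro h
  have hvec : natBasisVec d j = (0 : Fin (d+1) → K) :=
    mulVec_injective_iff_isUnit.mpr hR (by rw [mulVec_zero]; exact h)
  simpa [natBasisVec] using congrFun hvec ⟨j, Nat.lt_succ_of_le hj⟩

theorem range_mulVecLin_le_of_natCol (hR : IsUnit R) {F : Matrix (Fin (d+1)) (Fin (d+1)) K}
    {W : Submodule K (Fin (d+1) → K)} (hW : ∀ j ≤ d, F *ᵥ natCol R j ∈ W) :
    LinearMap.range F.mulVecLin ≤ W := by
  rintro _ ⟨w, rfl⟩
  obtain ⟨c, rfl⟩ := mulVec_surjective_iff_isUnit.mpr hR w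
  have hcol : Set.range (F * R).col ⊆ W := by
    rintro _ ⟨j, rfl⟩
    rw [← mulVec_single_one, ← mulVec_mulVec, ← natBasisVec_val]
    exact hW j (Nat.lt_succ_iff.mp j.isLt)
  have hmem : (F * R) *ᵥ c ∈ LinearMap.range (F * R).mulVecLin := ⟨c, rfl⟩
  rw [range_mulVecLin] at hmem
  rw [mulVecLin_apply, mulVec_mulVec]
  exact Submodule.span_le.mpr hcol hmem

theorem mulVec_natCol_of_lowerBidiag {μ : ℕ → K} (hX : X * R = R * lowerBidiag d μ) {j : ℕ}
    (hj : j ≤ d) : X *ᵥ natCol R j = μ j • natCol R j + natCol R (j+1) := by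
  rw [natCol, mulVec_mulVec, hX, ← mulVec_mulVec, lowerBidiag_mulVec_natBasisVec μ hj,
    mulVec_add, mulVec_smul]
  rfl

theorem mulVec_natCol_zero_of_upperBidiag {θs ψ : ℕ → K} (hX : X * R = R * upperBidiag d θs ψ) :
    X *ᵥ natCol R 0 = θs 0 • natCol R 0 := by
  rw [natCol, mulVec_mulVec, hX, ← mulVec_mulVec, upperBidiag_mulVec_natBasisVec_zero,
    mulVec_smul]

theorem mulVec_natCol_succ_of_upperBidiag {θs ψ : ℕ → K} (hX : X * R = R * upperBidiag d θs ψ)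
    {j : ℕ} (hj : j + 1 ≤ d) :
    X *ᵥ natCol R (j+1) = θs (j+1) • natCol R (j+1) + ψ (j+1) • natCol R j := by
  rw [natCol, mulVec_mulVec, hX, ← mulVec_mulVec, upperBidiag_mulVec_natBasisVec_succ θs ψ hj,
    mulVec_add, mulVec_smul, mulVec_smul]
  rfl

structure IsSpectralDecomp (X : Matrix (Fin (d+1)) (Fin (d+1)) K)
    (E : ℕ → Matrix (Fin (d+1)) (Fin (d+1)) K) (θ : ℕ → K) : Prop where
  injOn : Set.InjOn θ (Set.Iic d)
  mul_E : ∀ i ≤ d, X * E i = θ i • E i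
  E_mul_E : ∀ i j, E i * E j = if i = j then E i else 0
  sum_E : ∑ i ∈ range (d+1), E i = 1

namespace IsSpectralDecomp

variable {E : ℕ → Matrix (Fin (d+1)) (Fin (d+1)) K} {θ μ ψ : ℕ → K}

theorem E_mul (h : IsSpectralDecomp X E θ) {i : ℕ} (hi : i ≤ d) : E i * X = θ i • E i :=
  calc E i * X = ∑ j ∈ range (d+1), E i * (X * E j) := by
        rw [← mul_sum, ← mul_sum, h.sum_E, mul_one]
    _ = ∑ j ∈ range (d+1), if i = j then θ i • E i else 0 := by
        refine sum_congr rfl fun j hj => ?_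
        rw [h.mul_E j (Nat.lt_succ_iff.mp (mem_range.mp hj)), mul_smul_comm, h.E_mul_E]
        split_ifs with hij <;> simp [hij]
    _ = θ i • E i := by simp [Nat.lt_succ_of_le hi]

theorem mulVec_eq_zero_of_ne (h : IsSpectralDecomp X E θ) {i m : ℕ} (hi : i ≤ d) (hm : m ≤ d)
    (hne : i ≠ m) {v : Fin (d+1) → K} (hv : X *ᵥ v = θ m • v) : E i *ᵥ v = 0 := by
  have heq : θ i • (E i *ᵥ v) = θ m • (E i *ᵥ v) := by
    rw [← smul_mulVec, ← h.E_mul hi, ← mulVec_mulVec, hv, mulVec_smul]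
  have hsub : θ i - θ m ≠ 0 := sub_ne_zero.mpr (h.injOn.ne hi hm hne)
  have hzero : (θ i - θ m) • (E i *ᵥ v) = 0 := by rw [sub_smul, heq, sub_self]
  exact (smul_eq_zero.mp hzero).resolve_left hsub

theorem mulVec_eq_self (h : IsSpectralDecomp X E θ) {i : ℕ} (hi : i ≤ d)
    {v : Fin (d+1) → K} (hv : X *ᵥ v = θ i • v) : E i *ᵥ v = v := by
  conv_rhs => rw [← one_mulVec v, ← h.sum_E, sum_mulVec]
  rw [sum_eq_single i (fun m hm hmi => ?_) (fun hi' => ?_)]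
  · exact h.mulVec_eq_zero_of_ne (Nat.lt_succ_iff.mp (mem_range.mp hm)) hi hmi hv
  · exact absurd (mem_range.mpr (Nat.lt_succ_of_le hi)) hi'

theorem prod_sub_ne_zero (h : IsSpectralDecomp X E θ) (ℓ : ℕ) {m : ℕ} (hm : m ≤ d) :
    ∏ k ∈ Ico ℓ m, (θ ℓ - θ (k+1)) ≠ 0 := by
  refine prod_ne_zero_iff.mpr fun k hk => sub_ne_zero.mpr (h.injOn.ne ?_ ?_ ?_) <;>
    simp only [mem_Ico, Set.mem_Iic] at hk ⊢ <;> omega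

theorem sub_smul_mulVec_natCol_succ (h : IsSpectralDecomp X E θ)
    (hX : X * R = R * upperBidiag d θ ψ) {ℓ j : ℕ} (hℓ : ℓ ≤ d) (hj : j + 1 ≤ d) :
    (θ ℓ - θ (j+1)) • (E ℓ *ᵥ natCol R (j+1)) = ψ (j+1) • (E ℓ *ᵥ natCol R j) := by
  have hproj : E ℓ *ᵥ (X *ᵥ natCol R (j+1)) = θ ℓ • (E ℓ *ᵥ natCol R (j+1)) := by
    rw [mulVec_mulVec, h.E_mul hℓ, smul_mulVec]
  rw [mulVec_natCol_succ_of_upperBidiag hX hj, mulVec_add, mulVec_smul, mulVec_smul] at hproj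
  rw [sub_smul, ← hproj, add_sub_cancel_left]

theorem mulVec_natCol_of_lt (h : IsSpectralDecomp X E θ) (hX : X * R = R * upperBidiag d θ ψ)
    {ℓ j : ℕ} (hℓ : ℓ ≤ d) (hj : j < ℓ) : E ℓ *ᵥ natCol R j = 0 := by
  induction j with
  | zero =>
    exact h.mulVec_eq_zero_of_ne hℓ (Nat.zero_le d) hj.ne'
      (mulVec_natCol_zero_of_upperBidiag hX)
  | succ j ih =>
    have hrec := h.sub_smul_mulVec_natCol_succ hX hℓ (by omega : j + 1 ≤ d)
    rw [ih (by omega), smul_zero] at hrec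
    exact (smul_eq_zero.mp hrec).resolve_left
      (sub_ne_zero.mpr (h.injOn.ne (Set.mem_Iic.mpr hℓ) (Set.mem_Iic.mpr (by omega)) hj.ne'))

theorem prod_smul_mulVec_natCol (h : IsSpectralDecomp X E θ)
    (hX : X * R = R * upperBidiag d θ ψ) {ℓ m : ℕ} (hℓm : ℓ ≤ m) (hm : m ≤ d) :
    (∏ k ∈ Ico ℓ m, (θ ℓ - θ (k+1))) • (E ℓ *ᵥ natCol R m)
      = (∏ k ∈ Ico ℓ m, ψ (k+1)) • (E ℓ *ᵥ natCol R ℓ) := by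
  induction m, hℓm using Nat.le_induction with
  | base => simp
  | succ m hℓm ih =>
    rw [prod_Ico_succ_top hℓm, prod_Ico_succ_top hℓm, mul_smul,
      h.sub_smul_mulVec_natCol_succ hX (hℓm.trans (by omega)) hm, smul_comm, ih (by omega),
      smul_smul, mul_comm]

theorem range_le_span_mulVec_natCol (h : IsSpectralDecomp X E θ)
    (hX : X * R = R * upperBidiag d θ ψ) (hR : IsUnit R) {ℓ : ℕ} (hℓ : ℓ ≤ d) :
    LinearMap.range (E ℓ).mulVecLin ≤ K ∙ (E ℓ *ᵥ natCol R ℓ) := by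
  refine range_mulVecLin_le_of_natCol hR fun m hm => ?_
  rcases lt_or_ge m ℓ with hmℓ | hℓm
  · rw [h.mulVec_natCol_of_lt hX hℓ hmℓ]
    exact Submodule.zero_mem _
  · have hD := h.prod_sub_ne_zero ℓ hm
    refine Submodule.mem_span_singleton.mpr ⟨(∏ k ∈ Ico ℓ m, (θ ℓ - θ (k+1)))⁻¹ *
      ∏ k ∈ Ico ℓ m, ψ (k+1), ?_⟩
    rw [mul_smul, ← h.prod_smul_mulVec_natCol hX hℓm hm, inv_smul_smul₀ hD]

theorem mulVec_natCol_eq_prod_smul (h : IsSpectralDecomp X E θ)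
    (hX : X * R = R * lowerBidiag d μ) {i j : ℕ} (hi : i ≤ d) (hj : j ≤ d + 1) :
    E i *ᵥ natCol R j = (∏ k ∈ range j, (θ i - μ k)) • (E i *ᵥ natCol R 0) := by
  induction j with
  | zero => simp
  | succ j ih =>
    have hproj : E i *ᵥ (X *ᵥ natCol R j) = θ i • (E i *ᵥ natCol R j) := by
      rw [mulVec_mulVec, h.E_mul hi, smul_mulVec]
    rw [mulVec_natCol_of_lowerBidiag hX (by omega), mulVec_add, mulVec_smul] at hproj
    rw [prod_range_succ, mul_comm, mul_smul, ← ih (by omega), sub_smul, ← hproj,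
      add_sub_cancel_left]

theorem range_eq_span_natCol_last (h : IsSpectralDecomp X E θ)
    (hX : X * R = R * lowerBidiag d μ) (hR : IsUnit R) (hμ : Set.InjOn μ (Set.Iic d))
    {i : ℕ} (hi : i ≤ d) (hθμ : θ i = μ d) :
    LinearMap.range (E i).mulVecLin = K ∙ natCol R d := by
  have hfix : E i *ᵥ natCol R d = natCol R d := by
    refine h.mulVec_eq_self hi ?_
    rw [mulVec_natCol_of_lowerBidiag hX le_rfl, natCol_of_lt (Nat.lt_succ_self d), add_zero, hθμ]
  have hc : ∏ k ∈ range d, (θ i - μ k) ≠ 0 := by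
    refine prod_ne_zero_iff.mpr fun k hk => ?_
    rw [hθμ, sub_ne_zero]
    exact hμ.ne (Set.mem_Iic.mpr le_rfl) (Set.mem_Iic.mpr (mem_range.mp hk).le)
      (mem_range.mp hk).ne'
  have h0 : E i *ᵥ natCol R 0 ∈ K ∙ natCol R d := by
    refine Submodule.mem_span_singleton.mpr ⟨(∏ k ∈ range d, (θ i - μ k))⁻¹, ?_⟩
    rw [← hfix, h.mulVec_natCol_eq_prod_smul hX hi (Nat.le_succ d), inv_smul_smul₀ hc]
  refine le_antisymm (range_mulVecLin_le_of_natCol hR fun j hj => ?_) ?_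
  · rw [h.mulVec_natCol_eq_prod_smul hX hi (hj.trans (Nat.le_succ d))]
    exact Submodule.smul_mem _ _ h0
  · rw [Submodule.span_singleton_le_iff_mem]
    exact ⟨natCol R d, hfix⟩

end IsSpectralDecomp

namespace LeonardSystem

variable (Φ : LeonardSystem K d) {P Q : Matrix (Fin (d+1)) (Fin (d+1)) K}

theorem isSpectralDecomp : IsSpectralDecomp Φ.A Φ.E Φ.theta :=
  ⟨Φ.theta_inj, Φ.AE, Φ.EE, Φ.sumE⟩

theorem isSpectralDecomp_dual : IsSpectralDecomp Φ.Astar Φ.Estar Φ.thetastar :=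
  ⟨Φ.thetastar_inj, Φ.AstarEstar, Φ.EstarEstar, Φ.sumEstar⟩

theorem injOn_theta_rev : Set.InjOn (fun i => Φ.theta (d - i)) (Set.Iic d) := by
  intro a ha b hb hab
  have := Φ.theta_inj (Set.mem_Iic.mpr (Nat.sub_le d a)) (Set.mem_Iic.mpr (Nat.sub_le d b)) hab
  simp only [Set.mem_Iic] at ha hb
  omega

theorem exists_natCol_zero_eq_smul {φ ϕ : ℕ → K} (hP : IsUnit P)
    (hBP : Φ.Astar * P = P * upperBidiag d Φ.thetastar φ) (hQ : IsUnit Q)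
    (hBQ : Φ.Astar * Q = Q * upperBidiag d Φ.thetastar ϕ) :
    ∃ s : K, s ≠ 0 ∧ natCol Q 0 = s • natCol P 0 := by
  have h := Φ.isSpectralDecomp_dual
  have hP0 := h.mulVec_eq_self (Nat.zero_le d) (mulVec_natCol_zero_of_upperBidiag hBP)
  have hQ0 := h.mulVec_eq_self (Nat.zero_le d) (mulVec_natCol_zero_of_upperBidiag hBQ)
  have hmem : natCol Q 0 ∈ K ∙ natCol P 0 :=
    hP0 ▸ h.range_le_span_mulVec_natCol hBP hP (Nat.zero_le d) ⟨natCol Q 0, hQ0⟩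
  obtain ⟨s, hs⟩ := Submodule.mem_span_singleton.mp hmem
  refine ⟨s, ?_, hs.symm⟩
  rintro rfl
  exact natCol_ne_zero hQ (Nat.zero_le d) (by rw [← hs, zero_smul])

/-- If `ψ_{j+1} = 0`, then `r_{j+1}` spans `E*_{j+1} V` while `E*_j` kills every `r_m` with
`m > j`, which would force `E*_j A E*_{j+1} = 0`. -/
theorem splitSeq_ne_zero {μ ψ : ℕ → K} (hR : IsUnit R) (hA : Φ.A * R = R * lowerBidiag d μ)
    (hB : Φ.Astar * R = R * upperBidiag d Φ.thetastar ψ) {j : ℕ} (hj : j + 1 ≤ d) :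
    ψ (j+1) ≠ 0 := by
  intro hψ
  have h := Φ.isSpectralDecomp_dual
  have hfix : Φ.Estar (j+1) *ᵥ natCol R (j+1) = natCol R (j+1) := by
    refine h.mulVec_eq_self hj ?_
    rw [mulVec_natCol_succ_of_upperBidiag hB hj, hψ, zero_smul, add_zero]
  have hkill : ∀ m, j + 1 ≤ m → Φ.Estar j *ᵥ natCol R m = 0 := by
    intro m hm
    rcases le_or_gt m d with hmd | hdm
    · have hprod := h.prod_smul_mulVec_natCol hB (by omega : j ≤ m) hmd
      rw [prod_eq_zero (f := fun k => ψ (k+1)) (mem_Ico.mpr ⟨le_rfl, hm⟩) hψ, zero_smul] at hprod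
      exact (smul_eq_zero.mp hprod).resolve_left (h.prod_sub_ne_zero j hmd)
    · rw [natCol_of_lt hdm, mulVec_zero]
  refine Φ.trid_near j (j+1) (by omega) hj (Or.inl rfl) (ext_of_mulVec_single fun v => ?_)
  have hmem := h.range_le_span_mulVec_natCol hB hR hj ⟨Pi.single v 1, rfl⟩
  rw [hfix, mulVecLin_apply] at hmem
  obtain ⟨t, ht⟩ := Submodule.mem_span_singleton.mp hmem
  rw [zero_mulVec, ← mulVec_mulVec, ← mulVec_mulVec, ← ht, mulVec_smul, mulVec_smul,
    mulVec_natCol_of_lowerBidiag hA hj, mulVec_add, mulVec_smul, hkill _ le_rfl,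
    hkill _ (Nat.le_succ _)]
  simp

/-- `E*_0 V + ⋯ + E*_{k-1} V`, described as the common kernel of the `E*_m` with `m ≥ k`. -/
def dualFlag (k : ℕ) : Submodule K (Fin (d+1) → K) :=
  ⨅ m ∈ Set.Ici k, LinearMap.ker (Φ.Estar m).mulVecLin

theorem mem_dualFlag {k : ℕ} {v : Fin (d+1) → K} :
    v ∈ Φ.dualFlag k ↔ ∀ m, k ≤ m → Φ.Estar m *ᵥ v = 0 := by
  simp [dualFlag]

theorem A_mulVec_mem_dualFlag {k : ℕ} {v : Fin (d+1) → K} (hv : v ∈ Φ.dualFlag k) :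
    Φ.A *ᵥ v ∈ Φ.dualFlag (k+1) := by
  rw [mem_dualFlag] at hv ⊢
  intro ℓ hℓ
  rcases le_or_gt ℓ d with hℓd | hdℓ
  · calc Φ.Estar ℓ *ᵥ (Φ.A *ᵥ v)
        = ∑ m ∈ range (d+1), (Φ.Estar ℓ * Φ.A * Φ.Estar m) *ᵥ v := by
          rw [← sum_mulVec, ← mul_sum, Φ.sumEstar, mul_one, mulVec_mulVec]
      _ = 0 := sum_eq_zero fun m hm => by
          rcases lt_or_ge m k with hmk | hkm
          · rw [Φ.trid_far ℓ m hℓd (Nat.lt_succ_iff.mp (mem_range.mp hm)) (Or.inr (by omega)),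
              zero_mulVec]
          · rw [← mulVec_mulVec, hv m hkm, mulVec_zero]
  · rw [Φ.Estar_top ℓ hdℓ, zero_mulVec]

theorem natCol_mem_dualFlag {ψ : ℕ → K} (hB : Φ.Astar * R = R * upperBidiag d Φ.thetastar ψ)
    (j : ℕ) : natCol R j ∈ Φ.dualFlag (j+1) := by
  refine Φ.mem_dualFlag.mpr fun ℓ hℓ => ?_
  rcases le_or_gt ℓ d with hℓd | hdℓ
  · exact Φ.isSpectralDecomp_dual.mulVec_natCol_of_lt hB hℓd hℓ
  · rw [Φ.Estar_top ℓ hdℓ, zero_mulVec]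

theorem natCol_sub_smul_mem_dualFlag {μ ν φ ϕ : ℕ → K} (hAP : Φ.A * P = P * lowerBidiag d μ)
    (hBP : Φ.Astar * P = P * upperBidiag d Φ.thetastar φ) (hAQ : Φ.A * Q = Q * lowerBidiag d ν)
    (hBQ : Φ.Astar * Q = Q * upperBidiag d Φ.thetastar ϕ) {s : K}
    (hs : natCol Q 0 = s • natCol P 0) {n : ℕ} (hn : n ≤ d) :
    natCol Q n - s • natCol P n ∈ Φ.dualFlag n := by
  induction n with
  | zero => rw [hs, sub_self]; exact Submodule.zero_mem _
  | succ n ih =>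
    have hstep : natCol Q (n+1) - s • natCol P (n+1)
        = Φ.A *ᵥ (natCol Q n - s • natCol P n) - ν n • natCol Q n + (s * μ n) • natCol P n := by
      rw [mulVec_sub, mulVec_smul, mulVec_natCol_of_lowerBidiag hAQ (by omega),
        mulVec_natCol_of_lowerBidiag hAP (by omega)]
      module
    rw [hstep]
    exact add_mem (sub_mem (Φ.A_mulVec_mem_dualFlag (ih (by omega)))
      (Submodule.smul_mem _ _ (Φ.natCol_mem_dualFlag hBQ n)))
      (Submodule.smul_mem _ _ (Φ.natCol_mem_dualFlag hBP n))

def dualSwitching (φ ϕ : ℕ → K) : Matrix (Fin (d+1)) (Fin (d+1)) K :=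
  ∑ ℓ ∈ range (d+1), ((∏ m ∈ range ℓ, ϕ (m+1)) / (∏ m ∈ range ℓ, φ (m+1))) • Φ.Estar ℓ

theorem smul_Estar_mulVec_natCol_last {μ ν φ ϕ : ℕ → K} (hAP : Φ.A * P = P * lowerBidiag d μ)
    (hBP : Φ.Astar * P = P * upperBidiag d Φ.thetastar φ) (hAQ : Φ.A * Q = Q * lowerBidiag d ν)
    (hBQ : Φ.Astar * Q = Q * upperBidiag d Φ.thetastar ϕ) (hφ : ∀ j < d, φ (j+1) ≠ 0) {s : K}
    (hs : natCol Q 0 = s • natCol P 0) {ℓ : ℕ} (hℓ : ℓ ≤ d) :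
    ((∏ m ∈ range ℓ, ϕ (m+1)) / (∏ m ∈ range ℓ, φ (m+1))) • (Φ.Estar ℓ *ᵥ natCol Q d)
      = (s * (∏ m ∈ range d, ϕ (m+1)) / ∏ m ∈ range d, φ (m+1)) • (Φ.Estar ℓ *ᵥ natCol P d) := by
  have h := Φ.isSpectralDecomp_dual
  have hcross : Φ.Estar ℓ *ᵥ natCol Q ℓ = s • (Φ.Estar ℓ *ᵥ natCol P ℓ) := by
    have := (Φ.mem_dualFlag.mp (Φ.natCol_sub_smul_mem_dualFlag hAP hBP hAQ hBQ hs hℓ)) ℓ le_rfl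
    rwa [mulVec_sub, mulVec_smul, sub_eq_zero] at this
  have hφℓ : ∏ m ∈ range ℓ, φ (m+1) ≠ 0 :=
    prod_ne_zero_iff.mpr fun m hm => hφ m ((mem_range.mp hm).trans_le hℓ)
  have hφℓd : ∏ m ∈ Ico ℓ d, φ (m+1) ≠ 0 :=
    prod_ne_zero_iff.mpr fun m hm => hφ m (mem_Ico.mp hm).2
  refine smul_right_injective _ (h.prod_sub_ne_zero ℓ le_rfl) ?_
  dsimp only
  rw [smul_comm, h.prod_smul_mulVec_natCol hBQ hℓ le_rfl, hcross, smul_comm _ (_ / _),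
    h.prod_smul_mulVec_natCol hBP hℓ le_rfl, smul_smul, smul_smul, smul_smul,
    ← prod_range_mul_prod_Ico _ hℓ, ← prod_range_mul_prod_Ico _ hℓ]
  congr 1
  field_simp

theorem dualSwitching_mulVec_natCol_last {μ ν φ ϕ : ℕ → K}
    (hAP : Φ.A * P = P * lowerBidiag d μ) (hBP : Φ.Astar * P = P * upperBidiag d Φ.thetastar φ)
    (hAQ : Φ.A * Q = Q * lowerBidiag d ν) (hBQ : Φ.Astar * Q = Q * upperBidiag d Φ.thetastar ϕ)
    (hφ : ∀ j < d, φ (j+1) ≠ 0) {s : K} (hs : natCol Q 0 = s • natCol P 0) :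
    Φ.dualSwitching φ ϕ *ᵥ natCol Q d
      = (s * (∏ m ∈ range d, ϕ (m+1)) / ∏ m ∈ range d, φ (m+1)) • natCol P d := by
  conv_rhs => rw [← one_mulVec (natCol P d), ← Φ.sumEstar, sum_mulVec, smul_sum]
  rw [dualSwitching, sum_mulVec]
  refine sum_congr rfl fun ℓ hℓ => ?_
  rw [smul_mulVec, Φ.smul_Estar_mulVec_natCol_last hAP hBP hAQ hBQ hφ hs
    (Nat.lt_succ_iff.mp (mem_range.mp hℓ))]

end LeonardSystem

end

/-- The dual switching element `S* = ∑_ℓ (ϕ_1⋯ϕ_ℓ)/(φ_1⋯φ_ℓ) E_ℓ*` of a Leonard system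
`Φ` with parameter array `({θ_i}; {θ_i*}; {φ_i}; {ϕ_i})` satisfies `S* E_0 V = E_d V`. -/
theorem stmt_13 {K : Type*} [Field K] {d : ℕ} (Φ : LeonardSystem K d)
    (φ ϕ : ℕ → K) (hpa : HasParameterArray Φ φ ϕ) :
    Submodule.map
      (Matrix.mulVecLin (∑ ℓ ∈ Finset.range (d+1),
        ((∏ m ∈ Finset.range ℓ, ϕ (m+1)) / (∏ m ∈ Finset.range ℓ, φ (m+1))) • Φ.Estar ℓ))
      (LinearMap.range (Φ.E 0).mulVecLin) = LinearMap.range (Φ.E d).mulVecLin := by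
  obtain ⟨⟨P, hP, hAP, hBP⟩, ⟨Q, hQ, hAQ, hBQ⟩⟩ := hpa
  obtain ⟨s, hs0, hs⟩ := Φ.exists_natCol_zero_eq_smul hP hBP hQ hBQ
  have hφ : ∀ j < d, φ (j+1) ≠ 0 := fun j hj => Φ.splitSeq_ne_zero hP hAP hBP hj
  have hϕ : ∀ j < d, ϕ (j+1) ≠ 0 := fun j hj => Φ.splitSeq_ne_zero hQ hAQ hBQ hj
  have hC : s * (∏ m ∈ range d, ϕ (m+1)) / ∏ m ∈ range d, φ (m+1) ≠ 0 :=
    div_ne_zero (mul_ne_zero hs0 (prod_ne_zero_iff.mpr fun j hj => hϕ j (mem_range.mp hj)))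
      (prod_ne_zero_iff.mpr fun j hj => hφ j (mem_range.mp hj))
  change Submodule.map (Φ.dualSwitching φ ϕ).mulVecLin _ = _
  rw [Φ.isSpectralDecomp.range_eq_span_natCol_last hAQ hQ Φ.injOn_theta_rev (Nat.zero_le d)
      (by simp),
    Φ.isSpectralDecomp.range_eq_span_natCol_last hAP hP Φ.theta_inj le_rfl rfl,
    Submodule.map_span, Set.image_singleton, mulVecLin_apply,
    Φ.dualSwitching_mulVec_natCol_last hAP hBP hAQ hBQ hφ hs,
    Submodule.span_singleton_smul_eq hC.isUnit]
end
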